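/- arXiv:2602.12551 — 6 statements merged into one kernel-verified Lean document; each statement's English description precedes it below -/
import Mathlib

section
/- Let T be a finite tournament that is neither a transitive tournament nor isomorphic to a tournament T[a,b,c] for any positive integers a, b, c. Then there exists a regular tournamenton W such that t(T, W) = 0. -/
open MeasureTheory

noncomputable section

/-- The unit interval as a subset of `ℝ`. -/
def I01 : Set ℝ := Set.Icc 0 1

/-- A tournamenton: a measurable `W : [0,1]² → [0,1]` with `W x y + W y x = 1`. -/
def IsTournamenton (W : ℝ → ℝ → ℝ) : Prop :=
  Measurable (Function.uncurry W) ∧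
  ∀ x ∈ I01, ∀ y ∈ I01, 0 ≤ W x y ∧ W x y ≤ 1 ∧ W x y + W y x = 1

/-- A tournamenton is regular if almost every vertex has out-degree `1/2`. -/
def IsRegularT (W : ℝ → ℝ → ℝ) : Prop :=
  ∀ᵐ x : ℝ, x ∈ I01 → (∫ y in I01, W x y) = 1 / 2

/-- `W` equals `1/2` almost everywhere on `[0,1]²`. -/
def ConstHalf (W : ℝ → ℝ → ℝ) : Prop :=
  ∀ᵐ p : ℝ × ℝ, p ∈ I01 ×ˢ I01 → W p.1 p.2 = 1 / 2

open scoped Classical in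
/-- Homomorphism density of the digraph with vertex set `V` and edge relation `E`
in the tournamenton `W`. -/
def homDensity {V : Type} [Fintype V] (E : V → V → Prop) (W : ℝ → ℝ → ℝ) : ℝ :=
  ∫ x in Set.univ.pi (fun _ : V => I01),
    ∏ p ∈ Finset.univ.filter (fun p : V × V => E p.1 p.2), W (x p.1) (x p.2)

/-- `E` is the edge relation of a tournament. -/
def IsTournament {V : Type} (E : V → V → Prop) : Prop :=
  (∀ v, ¬ E v v) ∧ ∀ u v : V, u ≠ v → (E u v ↔ ¬ E v u)

/-- the edge relation is transitive (for a tournament: a strict linear order). -/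
def IsTransitive {V : Type} (E : V → V → Prop) : Prop :=
  ∀ u v w : V, E u v → E v w → E u w

/-- Vertex set of the blow-up `C[a,b,c]` of the cyclic triangle. -/
abbrev CV (a b c : ℕ) := Fin a ⊕ Fin b ⊕ Fin c

/-- Which of the three parts a vertex belongs to. -/
def cpart {a b c : ℕ} : CV a b c → Fin 3
  | .inl _ => 0
  | .inr (.inl _) => 1
  | .inr (.inr _) => 2

/-- Index of a vertex inside its part. -/
def cidx {a b c : ℕ} : CV a b c → ℕ
  | .inl i => i
  | .inr (.inl i) => i
  | .inr (.inr i) => i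

/-- Edges of `C[a,b,c]`: all edges from part 0 to part 1, part 1 to part 2 and
part 2 to part 0; no edges inside parts. -/
def CEdge (a b c : ℕ) (u v : CV a b c) : Prop := cpart v = cpart u + 1

/-- Edges of the tournament `T[a,b,c]`: `C[a,b,c]` plus a transitive tournament on
each of the three parts. -/
def TEdge (a b c : ℕ) (u v : CV a b c) : Prop :=
  cpart v = cpart u + 1 ∨ (cpart u = cpart v ∧ cidx u < cidx v)

/-- Edges of `B[c]`: the digraph `C[1,1,c]` minus the edge between the two singleton
parts (a source, `c` middle vertices, a sink). -/
def BEdge (c : ℕ) (u v : CV 1 1 c) : Prop :=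
  cpart v = cpart u + 1 ∧ cpart u ≠ 0

/-- `E` is isomorphic to the tournament `T[a,b,c]`. -/
def IsoToT {V : Type} (E : V → V → Prop) (a b c : ℕ) : Prop :=
  ∃ e : V ≃ CV a b c, ∀ u v : V, E u v ↔ TEdge a b c (e u) (e v)

/-- The tournament `E` contains a subtournament isomorphic to `E'`. -/
def ContainsSub {V V' : Type} (E : V → V → Prop) (E' : V' → V' → Prop) : Prop :=
  ∃ f : V' → V, Function.Injective f ∧ ∀ u v : V', E' u v ↔ E (f u) (f v)

/-- The tournament `W₄`: a source dominating a cyclic triangle. -/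
def W4Edge (u v : Fin 4) : Prop :=
  (u = 0 ∧ v ≠ 0) ∨ (u = 1 ∧ v = 2) ∨ (u = 2 ∧ v = 3) ∨ (u = 3 ∧ v = 1)

/-- The tournament `L₄`: a sink dominated by a cyclic triangle. -/
def L4Edge (u v : Fin 4) : Prop :=
  (v = 0 ∧ u ≠ 0) ∨ (u = 1 ∧ v = 2) ∨ (u = 2 ∧ v = 3) ∨ (u = 3 ∧ v = 1)

/-- The 5-vertex carousel tournament `C₅`. -/
def C5Edge (u v : ZMod 5) : Prop := v - u = 1 ∨ v - u = 2


/-!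
If `T` contains `W₄` or `L₄`, use the circular tournamenton, in which `x → y` when `y` lies
less than half a turn after `x` on `ℝ / ℤ`. For almost every placement of the vertices, a
copy of `T` of positive weight puts the out- or in-neighbourhood of a vertex inside an open
half-circle, where the orientation is transitive; so that neighbourhood contains no cyclic
triangle.

Otherwise use the ternary tournamenton, in which `x → y` when, at the first ternary digit
where `x` and `y` differ, the digit of `y` is that of `x` plus one mod 3; the out-neighbourhood
of `x` is a disjoint union of intervals of lengths `3⁻¹, 3⁻², …`, of total length `1/2`. A copy
of `T` of positive weight orients `T` in this way. At the first digit on which the vertices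
disagree they split into three classes with `A → B → C → A`. A cyclic triangle inside one class
together with a vertex of another class would form a `W₄` or an `L₄`, so every class is
transitive, and as `T` is not transitive all three classes are nonempty, i.e.
`T ≅ T[|A|, |B|, |C|]`.
-/

theorem ZMod.three_eq_add_one_or_eq_or_add_one_eq (a b : ZMod 3) :
    b = a + 1 ∨ b = a ∨ a = b + 1 := by
  revert a b; decide

theorem ZMod.three_add_one_ne_self (a : ZMod 3) : a + 1 ≠ a := by
  revert a; decide

theorem ZMod.three_ne_add_one_of_eq_add_one {a b : ZMod 3} (h : b = a + 1) : a ≠ b + 1 := by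
  subst h; revert a; decide

namespace IsTournament

variable {V : Type} {E : V → V → Prop}

theorem ne_of_rel (hT : IsTournament E) {u v : V} (h : E u v) : u ≠ v := by
  rintro rfl
  exact hT.1 u h

theorem not_rel_of_rel (hT : IsTournament E) {u v : V} (h : E u v) : ¬ E v u :=
  (hT.2 u v (hT.ne_of_rel h)).1 h

theorem rel_of_not_rel (hT : IsTournament E) {u v : V} (huv : u ≠ v) (h : ¬ E u v) : E v u :=
  not_not.1 (mt (hT.2 u v huv).2 h)

theorem rel_trans_of_not_rel (hT : IsTournament E) {a b c : V} (hab : E a b) (hbc : E b c)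
    (hca : ¬ E c a) : E a c :=
  hT.rel_of_not_rel (by rintro rfl; exact hT.not_rel_of_rel hab hbc) hca

theorem exists_cycle (hT : IsTournament E) (hnt : ¬ IsTransitive E) :
    ∃ a b c, E a b ∧ E b c ∧ E c a := by
  simp only [IsTransitive, not_forall] at hnt
  obtain ⟨a, b, c, hab, hbc, hac⟩ := hnt
  exact ⟨a, b, c, hab, hbc, by_contra fun hca => hac (hT.rel_trans_of_not_rel hab hbc hca)⟩

end IsTournament

/-- `E` contains neither `W₄` (a vertex dominating a cyclic triangle) nor `L₄` (a vertex
dominated by one). -/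
def IsLocallyTransitive {V : Type} (E : V → V → Prop) : Prop :=
  ∀ w a b c, E a b → E b c → E c a →
    ¬ (E w a ∧ E w b ∧ E w c) ∧ ¬ (E a w ∧ E b w ∧ E c w)

section CyclicPartition

open Finset

-- `ZMod 3` is definitionally `Fin 3`, with the same addition, so it can index the parts `cpart`.
def mkCV (n : ZMod 3 → ℕ) : (i : ZMod 3) → Fin (n i) → CV (n 0) (n 1) (n 2)
  | 0, j => .inl j
  | 1, j => .inr (.inl j)
  | 2, j => .inr (.inr j)

theorem cpart_mkCV (n : ZMod 3 → ℕ) (i : ZMod 3) (j : Fin (n i)) : cpart (mkCV n i j) = i := by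
  match i, j with
  | 0, _ | 1, _ | 2, _ => rfl

theorem cidx_mkCV (n : ZMod 3 → ℕ) (i : ZMod 3) (j : Fin (n i)) : cidx (mkCV n i j) = j := by
  match i, j with
  | 0, _ | 1, _ | 2, _ => rfl

theorem tEdge_mkCV_iff (n : ZMod 3 → ℕ) {i i' : ZMod 3} (j : Fin (n i)) (j' : Fin (n i')) :
    TEdge _ _ _ (mkCV n i j) (mkCV n i' j') ↔ i' = i + 1 ∨ (i = i' ∧ (j : ℕ) < j') := by
  unfold TEdge
  rw [cpart_mkCV, cpart_mkCV, cidx_mkCV, cidx_mkCV]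
  exact Iff.rfl

variable {V : Type} [Fintype V] {E : V → V → Prop}

theorem isoToT_of_rank {n : ZMod 3 → ℕ} (p : V → ZMod 3) (r : V → ℕ)
    (hr : ∀ v, r v < n (p v))
    (hinj : ∀ u v, p u = p v → r u = r v → u = v)
    (hcard : Fintype.card V = n 0 + n 1 + n 2)
    (hE : ∀ u v, E u v ↔ p v = p u + 1 ∨ (p u = p v ∧ r u < r v)) :
    IsoToT E (n 0) (n 1) (n 2) := by
  let f : V → CV (n 0) (n 1) (n 2) := fun v => mkCV n (p v) ⟨r v, hr v⟩
  have hf : Function.Injective f := fun u v h => by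
    have hp := congrArg cpart h
    have hr := congrArg cidx h
    simp only [f, cpart_mkCV, cidx_mkCV] at hp hr
    exact hinj u v hp hr
  have hbij : Function.Bijective f :=
    (Fintype.bijective_iff_injective_and_card f).2 ⟨hf, by simp [hcard, add_assoc]⟩
  exact ⟨Equiv.ofBijective f hbij, fun u v =>
    (hE u v).trans (tEdge_mkCV_iff n (⟨r u, hr u⟩ : Fin (n (p u))) ⟨r v, hr v⟩).symm⟩

variable (E) in
open scoped Classical in
def partRank (p : V → ZMod 3) (v : V) : ℕ := #{w | p w = p v ∧ E w v}

theorem IsTournament.partRank_lt_card (hT : IsTournament E) (p : V → ZMod 3) (v : V) :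
    partRank E p v < #{w | p w = p v} := by
  refine card_lt_card ((ssubset_iff_of_subset ?_).2 ⟨v, ?_, ?_⟩)
  · intro w
    simp only [mem_filter, mem_univ, true_and]
    exact And.left
  · simp
  · simp [hT.1 v]

theorem IsTournament.partRank_lt_partRank (hT : IsTournament E) {p : V → ZMod 3}
    (htrans : ∀ a b c, p a = p b → p b = p c → E a b → E b c → E a c)
    {u v : V} (hp : p u = p v) (huv : E u v) : partRank E p u < partRank E p v := by
  refine card_lt_card ((ssubset_iff_of_subset ?_).2 ⟨u, ?_, ?_⟩)
  · intro w
    simp only [mem_filter, mem_univ, true_and]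
    exact fun ⟨hw, hwu⟩ => ⟨hw.trans hp, htrans w u v hw hp hwu huv⟩
  · simp [hp, huv]
  · simp [hT.1 u]

theorem IsTournament.isoToT_of_cyclicPartition (hT : IsTournament E) (p : V → ZMod 3)
    (hcross : ∀ u v, p v = p u + 1 → E u v)
    (htrans : ∀ a b c, p a = p b → p b = p c → E a b → E b c → E a c) :
    IsoToT E #{v | p v = 0} #{v | p v = 1} #{v | p v = 2} := by
  refine isoToT_of_rank (n := fun i => #{v | p v = i}) p (partRank E p)
    (hT.partRank_lt_card p) (fun u v hp hr => ?_) ?_ (fun u v => ?_)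
  · by_contra huv
    rcases em (E u v) with h | h
    · exact (hT.partRank_lt_partRank htrans hp h).ne hr
    · exact (hT.partRank_lt_partRank htrans hp.symm (hT.rel_of_not_rel huv h)).ne hr.symm
  · rw [← card_univ, card_eq_sum_card_fiberwise (f := p) (t := univ) (fun _ _ => mem_univ _)]
    exact Fin.sum_univ_three _
  · rcases ZMod.three_eq_add_one_or_eq_or_add_one_eq (p u) (p v) with h | h | h
    · exact iff_of_true (hcross u v h) (Or.inl h)
    · constructor
      · exact fun huv => Or.inr ⟨h.symm, hT.partRank_lt_partRank htrans h.symm huv⟩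
      · rintro (h' | ⟨-, hr⟩)
        · exact absurd (h'.symm.trans h) (ZMod.three_add_one_ne_self _)
        · by_contra huv
          obtain rfl | hne := eq_or_ne u v
          · exact lt_irrefl _ hr
          · exact (hT.partRank_lt_partRank htrans h (hT.rel_of_not_rel hne huv)).not_gt hr
    · refine iff_of_false (hT.not_rel_of_rel (hcross v u h)) ?_
      rintro (h' | ⟨h', -⟩)
      · exact ZMod.three_ne_add_one_of_eq_add_one h' h
      · exact ZMod.three_add_one_ne_self _ (h.symm.trans h')
end CyclicPartition

section LexCyc

def IsLexCycAt (s t : ℕ → ZMod 3) (k : ℕ) : Prop :=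
  (∀ j < k, s j = t j) ∧ t k = s k + 1

def LexCyc (s t : ℕ → ZMod 3) : Prop := ∃ k, IsLexCycAt s t k

variable {s t : ℕ → ZMod 3}

theorem IsLexCycAt.not_lt {k l : ℕ} (hk : IsLexCycAt s t k) (hl : IsLexCycAt s t l) :
    ¬ k < l := fun h =>
  ZMod.three_add_one_ne_self _ (hk.2.symm.trans (hl.1 k h).symm)

theorem IsLexCycAt.unique {k l : ℕ} (hk : IsLexCycAt s t k) (hl : IsLexCycAt s t l) :
    k = l :=
  le_antisymm (le_of_not_gt (hl.not_lt hk)) (le_of_not_gt (hk.not_lt hl))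

theorem LexCyc.not_lexCyc (h : LexCyc s t) : ¬ LexCyc t s := by
  rintro ⟨l, hl⟩
  obtain ⟨k, hk⟩ := h
  rcases lt_trichotomy k l with hkl | rfl | hlk
  · exact ZMod.three_add_one_ne_self _ (hk.2.symm.trans (hl.1 k hkl))
  · exact ZMod.three_ne_add_one_of_eq_add_one hk.2 hl.2
  · exact ZMod.three_add_one_ne_self _ (hl.2.symm.trans (hk.1 l hlk))

theorem LexCyc.ne (h : LexCyc s t) : s ≠ t := by
  rintro rfl
  exact h.not_lexCyc h

theorem lexCyc_or_lexCyc_of_ne (h : s ≠ t) : LexCyc s t ∨ LexCyc t s := by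
  classical
  have hex : ∃ k, s k ≠ t k := Function.ne_iff.1 h
  have hbelow : ∀ j < Nat.find hex, s j = t j := fun j hj => not_not.1 (Nat.find_min hex hj)
  rcases ZMod.three_eq_add_one_or_eq_or_add_one_eq (s (Nat.find hex)) (t (Nat.find hex))
    with h' | h' | h'
  · exact Or.inl ⟨_, hbelow, h'⟩
  · exact absurd h'.symm (Nat.find_spec hex)
  · exact Or.inr ⟨_, fun j hj => (hbelow j hj).symm, h'⟩

theorem exists_level_lexCyc {V : Type} (σ : V → ℕ → ZMod 3) {a b : V} (hab : σ a ≠ σ b) :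
    ∃ m, (∃ u v, σ u m ≠ σ v m) ∧
      ∀ u v, σ v m = σ u m + 1 → LexCyc (σ u) (σ v) := by
  classical
  have hex : ∃ m, ∃ u v, σ u m ≠ σ v m := by
    obtain ⟨k, hk⟩ := Function.ne_iff.1 hab
    exact ⟨k, a, b, hk⟩
  refine ⟨Nat.find hex, Nat.find_spec hex, fun u v h => ⟨_, fun j hj => ?_, h⟩⟩
  by_contra hne
  exact Nat.find_min hex hj ⟨u, v, hne⟩

end LexCyc

namespace IsTournament

variable {V : Type} {E : V → V → Prop}

theorem rel_of_lexCyc (hT : IsTournament E) {σ : V → ℕ → ZMod 3}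
    (hσ : ∀ u v, E u v → LexCyc (σ u) (σ v)) {u v : V} (h : LexCyc (σ u) (σ v)) :
    E u v := by
  by_contra huv
  have hne : u ≠ v := by rintro rfl; exact h.ne rfl
  exact h.not_lexCyc (hσ v u (hT.rel_of_not_rel hne huv))

theorem trans_of_isLocallyTransitive (hT : IsTournament E) (hloc : IsLocallyTransitive E)
    {p : V → ZMod 3} (hcross : ∀ u v, p v = p u + 1 → E u v) (hsplit : ∃ u v, p u ≠ p v) :
    ∀ a b c, p a = p b → p b = p c → E a b → E b c → E a c := by
  intro a b c hab' hbc' hab hbc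
  refine hT.rel_trans_of_not_rel hab hbc fun hca => ?_
  obtain ⟨w, hw⟩ : ∃ w, p w ≠ p a := by
    obtain ⟨u, v, huv⟩ := hsplit
    by_cases hu : p u = p a
    · exact ⟨v, fun hv => huv (hu.trans hv.symm)⟩
    · exact ⟨u, hu⟩
  rcases ZMod.three_eq_add_one_or_eq_or_add_one_eq (p a) (p w) with h | h | h
  · refine (hloc w a b c hab hbc hca).2 ⟨hcross a w h, hcross b w ?_, hcross c w ?_⟩
    · rwa [← hab']
    · rwa [← hbc', ← hab']
  · exact hw h
  · refine (hloc w a b c hab hbc hca).1 ⟨hcross w a h, hcross w b ?_, hcross w c ?_⟩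
    · rwa [← hab']
    · rwa [← hbc', ← hab']

theorem surjective_of_cycle (hT : IsTournament E) {p : V → ZMod 3}
    (hcross : ∀ u v, p v = p u + 1 → E u v)
    (htrans : ∀ a b c, p a = p b → p b = p c → E a b → E b c → E a c)
    {a b c : V} (hab : E a b) (hbc : E b c) (hca : E c a) : Function.Surjective p := by
  have hstep : ∀ u v, E u v → p v = p u ∨ p v = p u + 1 := by
    intro u v huv
    rcases ZMod.three_eq_add_one_or_eq_or_add_one_eq (p u) (p v) with h | h | h
    · exact Or.inr h
    · exact Or.inl h
    · exact absurd (hcross v u h) (hT.not_rel_of_rel huv)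
  have hflat : ¬ (p b = p a ∧ p c = p b) := fun h =>
    hT.not_rel_of_rel hca (htrans a b c h.1.symm h.2.symm hab hbc)
  -- the increments of `p` along the cycle lie in `{0, 1}` and sum to `0` in `ZMod 3`
  have key : ∀ x y z : ZMod 3, (y = x ∨ y = x + 1) → (z = y ∨ z = y + 1) →
      (x = z ∨ x = z + 1) → ¬ (y = x ∧ z = y) → ∀ i, i = x ∨ i = y ∨ i = z := by
    decide
  intro i
  rcases key _ _ _ (hstep a b hab) (hstep b c hbc) (hstep c a hca) hflat i with h | h | h <;>
    exact ⟨_, h.symm⟩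

theorem exists_isoToT_of_lexCyc [Fintype V] (hT : IsTournament E) (hnt : ¬ IsTransitive E)
    (hloc : IsLocallyTransitive E) (σ : V → ℕ → ZMod 3)
    (hσ : ∀ u v, E u v → LexCyc (σ u) (σ v)) :
    ∃ a b c : ℕ, 0 < a ∧ 0 < b ∧ 0 < c ∧ IsoToT E a b c := by
  obtain ⟨a, b, c, hab, hbc, hca⟩ := hT.exists_cycle hnt
  obtain ⟨m, hsplit, hlevel⟩ := exists_level_lexCyc σ (hσ a b hab).ne
  have hcross : ∀ u v, σ v m = σ u m + 1 → E u v := fun u v h =>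
    hT.rel_of_lexCyc hσ (hlevel u v h)
  have htrans := hT.trans_of_isLocallyTransitive hloc hcross hsplit
  have hsurj := hT.surjective_of_cycle hcross htrans hab hbc hca
  have hpos : ∀ i, 0 < (Finset.univ.filter fun v => σ v m = i).card := fun i =>
    Finset.card_pos.2 ((hsurj i).imp fun v hv => by simpa using hv)
  exact ⟨_, _, _, hpos 0, hpos 1, hpos 2, hT.isoToT_of_cyclicPartition _ hcross htrans⟩

end IsTournament

section TournamentonOfRel

variable {R : ℝ → ℝ → Prop}

open scoped Classical in
def tournamentonOf (R : ℝ → ℝ → Prop) (x y : ℝ) : ℝ :=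
  if R x y then 1 else if R y x then 0 else 1 / 2

theorem tournamentonOf_add_swap (hR : ∀ x y, R x y → ¬ R y x) (x y : ℝ) :
    tournamentonOf R x y + tournamentonOf R y x = 1 := by
  unfold tournamentonOf
  by_cases h : R x y
  · simp [h, hR x y h]
  · by_cases h' : R y x <;> norm_num [h, h']

theorem isTournamenton_tournamentonOf (hm : MeasurableSet {p : ℝ × ℝ | R p.1 p.2})
    (hR : ∀ x y, R x y → ¬ R y x) : IsTournamenton (tournamentonOf R) := by
  refine ⟨?_, fun x _ y _ => ⟨?_, ?_, tournamentonOf_add_swap hR x y⟩⟩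
  · exact Measurable.ite hm measurable_const
      (Measurable.ite (measurable_swap hm) measurable_const measurable_const)
  all_goals unfold tournamentonOf; split_ifs <;> norm_num

theorem rel_of_tournamentonOf_ne_zero {x y : ℝ} (htot : R x y ∨ R y x)
    (hW : tournamentonOf R x y ≠ 0) : R x y := by
  by_contra h
  exact hW (by simp [tournamentonOf, h, htot.resolve_left h])

theorem setIntegral_tournamentonOf {S : Set ℝ} (hS : MeasurableSet S) {x : ℝ}
    (hRx : MeasurableSet {y | R x y}) (hties : volume {y ∈ S | ¬ R x y ∧ ¬ R y x} = 0) :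
    ∫ y in S, tournamentonOf R x y = volume.real {y ∈ S | R x y} := by
  have hae : ∀ᵐ y ∂volume.restrict S, tournamentonOf R x y = {y | R x y}.indicator 1 y := by
    rw [ae_restrict_iff' hS]
    filter_upwards [measure_eq_zero_iff_ae_notMem.1 hties] with y hy hyS
    by_cases h : R x y
    · simp [tournamentonOf, h]
    · have h' : R y x := by by_contra h'; exact hy ⟨hyS, h, h'⟩
      simp [tournamentonOf, h, h']
  rw [integral_congr_ae hae, integral_indicator_one hRx, measureReal_restrict_apply hRx,
    Set.inter_comm]
  rfl

end TournamentonOfRel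

theorem homDensity_eq_zero_of_ae {V : Type} [Fintype V] (E : V → V → Prop)
    (W : ℝ → ℝ → ℝ)
    (h : ∀ᵐ x : V → ℝ, ∃ u v, E u v ∧ W (x u) (x v) = 0) : homDensity E W = 0 := by
  refine integral_eq_zero_of_ae (ae_restrict_of_ae ?_)
  filter_upwards [h] with x ⟨u, v, huv, h0⟩
  exact Finset.prod_eq_zero (i := (u, v)) (by simpa using huv) h0

theorem ae_forall_sub_notMem {V : Type} [Fintype V] {C : Set ℝ} (hC : C.Countable) :
    ∀ᵐ x : V → ℝ, ∀ u v, u ≠ v → x u - x v ∉ C := by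
  classical
  simp only [ae_all_iff]
  intro u v huv
  let L : (V → ℝ) →ₗ[ℝ] ℝ :=
    LinearMap.proj (R := ℝ) (φ := fun _ : V => ℝ) u - LinearMap.proj v
  have hL : Function.Surjective L := fun t => ⟨Pi.single u t, by simp [L, huv]⟩
  have hCc : ∀ᵐ t : ℝ, t ∈ Cᶜ := measure_eq_zero_iff_ae_notMem.1 (hC.measure_zero volume)
  exact (ae_comp_linearMap_mem_iff L volume volume hL hC.measurableSet.compl).2 hCc

theorem setIntegral_Icc_sub_eq_half {h : ℝ → ℝ} (hper : Function.Periodic h 1)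
    (hsum : ∀ t, h t + h (-t) = 1) (hint : IntervalIntegrable h volume 0 1) (x : ℝ) :
    ∫ y in Set.Icc 0 1, h (y - x) = 1 / 2 := by
  have hint' : ∀ a b, IntervalIntegrable h volume a b :=
    hper.intervalIntegrable₀ one_ne_zero (by simpa using hint)
  have hright : ∫ y in (0 : ℝ)..1, h (y - x) = ∫ y in (0 : ℝ)..1, h y := by
    rw [intervalIntegral.integral_comp_sub_right, zero_sub, sub_eq_neg_add]
    simpa using hper.intervalIntegral_add_eq (-x) 0
  have hleft : ∫ y in (0 : ℝ)..1, h (x - y) = ∫ y in (0 : ℝ)..1, h y := by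
    rw [intervalIntegral.integral_comp_sub_left, sub_zero]
    simpa using hper.intervalIntegral_add_eq (x - 1) 0
  have htotal : (∫ y in (0 : ℝ)..1, h (y - x)) + ∫ y in (0 : ℝ)..1, h (x - y) = 1 := by
    have hpt : ∀ y, h (y - x) + h (x - y) = 1 := fun y => by simpa using hsum (y - x)
    have i1 : IntervalIntegrable (fun y => h (y - x)) volume 0 1 := by
      simpa using (hint' (-x) (1 - x)).comp_sub_right x
    have i2 : IntervalIntegrable (fun y => h (x - y)) volume 0 1 := by
      simpa using (hint' x (x - 1)).comp_sub_left x
    rw [← intervalIntegral.integral_add i1 i2]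
    simp only [hpt, intervalIntegral.integral_const, sub_zero, smul_eq_mul, mul_one]
  rw [integral_Icc_eq_integral_Ioc, ← intervalIntegral.integral_of_le zero_le_one]
  linarith

section Circle

def circleRel (x y : ℝ) : Prop := Int.fract (y - x) ∈ Set.Ioo 0 (1 / 2)

theorem measurableSet_circleRel : MeasurableSet {p : ℝ × ℝ | circleRel p.1 p.2} :=
  (measurable_snd.sub measurable_fst).fract measurableSet_Ioo

theorem circleRel.not_circleRel {x y : ℝ} (h : circleRel x y) : ¬ circleRel y x := by
  intro h'
  have hneg : Int.fract (x - y) = 1 - Int.fract (y - x) := by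
    rw [← neg_sub, Int.fract_neg h.1.ne']
  unfold circleRel at h h'
  rw [hneg] at h'
  linarith [h.2, h'.2]

theorem circleRel_or_circleRel {x y : ℝ} (h : x - y ∉ Set.range fun n : ℤ => (n : ℝ) / 2) :
    circleRel x y ∨ circleRel y x := by
  have hne : ∀ n : ℤ, Int.fract (y - x) ≠ n / 2 := by
    intro n hn
    refine h ⟨-2 * ⌊y - x⌋ - n, ?_⟩
    have := Int.self_sub_floor (y - x)
    push_cast
    linarith
  have h0 : 0 < Int.fract (y - x) :=
    (Int.fract_nonneg _).lt_of_ne fun h0 => hne 0 (by rw [← h0]; simp)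
  rcases lt_or_gt_of_ne (hne 1) with hlt | hgt
  · exact Or.inl ⟨h0, by simpa using hlt⟩
  · refine Or.inr ⟨?_, ?_⟩ <;> rw [← neg_sub, Int.fract_neg h0.ne'] <;>
      linarith [Int.fract_lt_one (y - x), show ((1 : ℤ) : ℝ) / 2 = 1 / 2 by norm_num]

theorem tournamentonOf_circleRel_eq (x y : ℝ) :
    tournamentonOf circleRel x y = tournamentonOf circleRel 0 (y - x) := by
  simp [tournamentonOf, circleRel]

theorem periodic_tournamentonOf_circleRel : Function.Periodic (tournamentonOf circleRel 0) 1 := by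
  intro t
  have hneg : Int.fract (-(t + 1)) = Int.fract (-t) := by
    rw [neg_add, ← sub_eq_add_neg, Int.fract_sub_one]
  simp only [tournamentonOf, circleRel, sub_zero, zero_sub, Int.fract_add_one, hneg]

theorem isTournamenton_circle : IsTournamenton (tournamentonOf circleRel) :=
  isTournamenton_tournamentonOf measurableSet_circleRel fun _ _ => circleRel.not_circleRel

theorem isRegularT_circle : IsRegularT (tournamentonOf circleRel) := by
  refine ae_of_all _ fun x _ => ?_
  have hm : Measurable (tournamentonOf circleRel 0) :=
    isTournamenton_circle.1.comp (measurable_const.prodMk measurable_id)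
  have hint : IntervalIntegrable (tournamentonOf circleRel 0) volume 0 1 := by
    refine (intervalIntegrable_iff_integrableOn_Ioc_of_le zero_le_one).2
      (Measure.integrableOn_of_bounded (M := 1) measure_Ioc_lt_top.ne hm.aestronglyMeasurable
        (ae_of_all _ fun t => ?_))
    unfold tournamentonOf
    split_ifs <;> norm_num
  simp_rw [I01, tournamentonOf_circleRel_eq x]
  refine setIntegral_Icc_sub_eq_half periodic_tournamentonOf_circleRel (fun t => ?_) hint x
  rw [← tournamentonOf_add_swap (fun _ _ => circleRel.not_circleRel) 0 t,
    tournamentonOf_circleRel_eq t 0, zero_sub]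

theorem fract_lt_fract_of_circleRel {p q : ℝ} (hp : Int.fract p < 1 / 2) (h : circleRel p q) :
    Int.fract p < Int.fract q := by
  by_contra hle
  have hsub : Int.fract (q - p) = Int.fract (Int.fract q - Int.fract p) :=
    Int.fract_eq_fract.2 ⟨⌊q⌋ - ⌊p⌋, by push_cast; simp only [Int.fract]; ring⟩
  obtain heq | hlt := (not_lt.1 hle).eq_or_lt
  · exact h.1.ne' (by rw [hsub, heq, sub_self, Int.fract_zero])
  · have : Int.fract (Int.fract q - Int.fract p) = Int.fract q - Int.fract p + 1 :=
      Int.fract_eq_iff.2 ⟨by linarith [Int.fract_nonneg p, Int.fract_nonneg q], by linarith,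
        -1, by push_cast; ring⟩
    linarith [h.2, Int.fract_nonneg q]

theorem isLocallyTransitive_of_circleRel {V : Type} {E : V → V → Prop} (x : V → ℝ)
    (hE : ∀ u v, E u v → circleRel (x u) (x v)) : IsLocallyTransitive E := by
  have hout : ∀ {w u v}, E w u → E u v → Int.fract (x u - x w) < Int.fract (x v - x w) :=
    fun hu huv => fract_lt_fract_of_circleRel (hE _ _ hu).2 (by simpa [circleRel] using hE _ _ huv)
  have hin : ∀ {w u v}, E v w → E u v → Int.fract (x w - x v) < Int.fract (x w - x u) :=
    fun hv huv => fract_lt_fract_of_circleRel (hE _ _ hv).2 (by simpa [circleRel] using hE _ _ huv)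
  intro w a b c hab hbc hca
  exact ⟨fun ⟨ha, hb, hc⟩ => ((hout ha hab).trans ((hout hb hbc).trans (hout hc hca))).false,
    fun ⟨ha, hb, hc⟩ => ((hin hb hab).trans ((hin ha hca).trans (hin hc hbc))).false⟩

end Circle

section Ternary

-- the digit of `x` in the place of `3⁻¹ ^ (k + 1)`
def ternaryDigit (x : ℝ) (k : ℕ) : ZMod 3 := ⌊(3 : ℝ) ^ (k + 1) * x⌋

theorem floor_three_pow_mul_eq_ediv (x : ℝ) (j i : ℕ) :
    ⌊(3 : ℝ) ^ j * x⌋ = ⌊(3 : ℝ) ^ (j + i) * x⌋ / 3 ^ i := by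
  have h := Int.floor_div_natCast ((3 : ℝ) ^ (j + i) * x) (3 ^ i)
  push_cast at h
  rw [← h, pow_add]
  congr 1
  field_simp

theorem eq_three_mul_add_val_iff (a A : ℤ) (c : ZMod 3) :
    a = 3 * A + c.val ↔ a / 3 = A ∧ (a : ZMod 3) = c := by
  have hc : (c.val : ℤ) < 3 := by exact_mod_cast c.val_lt
  constructor
  · rintro rfl
    refine ⟨by omega, ?_⟩
    push_cast
    rw [show (3 : ZMod 3) = 0 from rfl]
    simp
  · rintro ⟨rfl, rfl⟩
    rw [ZMod.val_intCast]
    omega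

theorem floor_three_pow_succ_eq_iff (y : ℝ) (k : ℕ) (A : ℤ) (c : ZMod 3) :
    ⌊(3 : ℝ) ^ (k + 1) * y⌋ = 3 * A + c.val ↔
      ⌊(3 : ℝ) ^ k * y⌋ = A ∧ ternaryDigit y k = c := by
  rw [eq_three_mul_add_val_iff, floor_three_pow_mul_eq_ediv y k 1, pow_one]
  rfl

theorem floor_three_pow_succ (y : ℝ) (k : ℕ) :
    ⌊(3 : ℝ) ^ (k + 1) * y⌋ = 3 * ⌊(3 : ℝ) ^ k * y⌋ + (ternaryDigit y k).val :=
  (floor_three_pow_succ_eq_iff y k _ _).2 ⟨rfl, rfl⟩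

theorem floor_three_pow_eq_floor_three_pow_iff {x y : ℝ} (h0 : ⌊x⌋ = ⌊y⌋) (k : ℕ) :
    ⌊(3 : ℝ) ^ k * x⌋ = ⌊(3 : ℝ) ^ k * y⌋ ↔
      ∀ j < k, ternaryDigit x j = ternaryDigit y j := by
  induction k with
  | zero => simpa using h0
  | succ k ih =>
    rw [Nat.forall_lt_succ_right, ← ih, floor_three_pow_succ x k, eq_comm,
      floor_three_pow_succ_eq_iff]
    exact and_congr eq_comm eq_comm

theorem eq_of_forall_floor_three_pow_eq {x y : ℝ}
    (h : ∀ k : ℕ, ⌊(3 : ℝ) ^ k * x⌋ = ⌊(3 : ℝ) ^ k * y⌋) : x = y := by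
  by_contra hne
  have hpos : 0 < |x - y| := abs_pos.2 (sub_ne_zero.2 hne)
  obtain ⟨k, hk⟩ := pow_unbounded_of_one_lt (|x - y|⁻¹) (by norm_num : (1 : ℝ) < 3)
  have hlt := Int.abs_sub_lt_one_of_floor_eq_floor (h k)
  rw [← mul_sub, abs_mul, abs_of_pos (by positivity)] at hlt
  have := mul_lt_mul_of_pos_right hk hpos
  rw [inv_mul_cancel₀ hpos.ne'] at this
  linarith

theorem ternaryDigit_add_intCast (x : ℝ) (n : ℤ) : ternaryDigit (x + n) = ternaryDigit x := by
  funext k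
  have h : (3 : ℝ) ^ (k + 1) * (x + n) =
      (3 : ℝ) ^ (k + 1) * x + ((3 ^ (k + 1) * n : ℤ) : ℝ) := by
    push_cast
    ring
  simp only [ternaryDigit]
  rw [h, Int.floor_add_intCast]
  push_cast
  rw [show (3 : ZMod 3) = 0 from rfl]
  simp

theorem exists_sub_eq_intCast_of_ternaryDigit_eq {x y : ℝ}
    (h : ternaryDigit x = ternaryDigit y) : ∃ n : ℤ, x - y = n := by
  refine ⟨⌊x⌋ - ⌊y⌋, ?_⟩
  have h0 : ⌊x⌋ = ⌊y + ((⌊x⌋ - ⌊y⌋ : ℤ) : ℝ)⌋ := by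
    rw [Int.floor_add_intCast]
    ring
  have := eq_of_forall_floor_three_pow_eq fun k =>
    (floor_three_pow_eq_floor_three_pow_iff h0 k).2 fun j _ => by rw [ternaryDigit_add_intCast, h]
  linarith

def ternaryRel (x y : ℝ) : Prop := LexCyc (ternaryDigit x) (ternaryDigit y)

theorem measurableSet_ternaryRel : MeasurableSet {p : ℝ × ℝ | ternaryRel p.1 p.2} := by
  have hd : ∀ k, Measurable (ternaryDigit · k) := fun k => by
    unfold ternaryDigit
    fun_prop
  simp only [ternaryRel, LexCyc, IsLexCycAt, Set.ofPred_exists, Set.ofPred_and, Set.ofPred_forall]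
  exact .iUnion fun k => .inter (.iInter fun j => .iInter fun _ =>
    measurableSet_eq_fun ((hd j).comp measurable_fst) ((hd j).comp measurable_snd))
    (measurableSet_eq_fun ((hd k).comp measurable_snd) (((hd k).comp measurable_fst).add_const 1))

theorem ternaryRel_or_ternaryRel {x y : ℝ} (h : x - y ∉ Set.range ((↑) : ℤ → ℝ)) :
    ternaryRel x y ∨ ternaryRel y x :=
  lexCyc_or_lexCyc_of_ne fun hd =>
    h ((exists_sub_eq_intCast_of_ternaryDigit_eq hd).imp fun _ => Eq.symm)

theorem isTournamenton_ternary : IsTournamenton (tournamentonOf ternaryRel) :=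
  isTournamenton_tournamentonOf measurableSet_ternaryRel fun _ _ => LexCyc.not_lexCyc

def ternaryCell (x : ℝ) (k : ℕ) : Set ℝ :=
  {y | ⌊y⌋ = ⌊x⌋ ∧ IsLexCycAt (ternaryDigit x) (ternaryDigit y) k}

theorem ternaryCell_eq (x : ℝ) (k : ℕ) : ternaryCell x k =
    {y | ⌊(3 : ℝ) ^ (k + 1) * y⌋ = 3 * ⌊(3 : ℝ) ^ k * x⌋ + (ternaryDigit x k + 1).val} := by
  ext y
  simp only [ternaryCell, Set.mem_ofPred_eq, floor_three_pow_succ_eq_iff, IsLexCycAt]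
  constructor
  · rintro ⟨h0, hpre, hk⟩
    exact ⟨((floor_three_pow_eq_floor_three_pow_iff h0.symm k).2 hpre).symm, hk⟩
  · rintro ⟨hk', hk⟩
    have h0 : ⌊y⌋ = ⌊x⌋ := by
      have hy := floor_three_pow_mul_eq_ediv y 0 k
      have hx := floor_three_pow_mul_eq_ediv x 0 k
      simp only [pow_zero, one_mul, zero_add] at hx hy
      rw [hx, hy, hk']
    exact ⟨h0, (floor_three_pow_eq_floor_three_pow_iff h0.symm k).1 hk'.symm, hk⟩

theorem volume_setOf_floor_mul_eq {c : ℝ} (hc : 0 < c) (N : ℤ) :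
    volume {y : ℝ | ⌊c * y⌋ = N} = ENNReal.ofReal c⁻¹ := by
  have : {y : ℝ | ⌊c * y⌋ = N} = Set.Ico (N / c) ((N + 1) / c) := by
    ext y
    simp only [Set.mem_ofPred_eq, Set.mem_Ico, Int.floor_eq_iff, div_le_iff₀ hc, lt_div_iff₀ hc]
    constructor <;> rintro ⟨h1, h2⟩ <;> constructor <;> linarith
  rw [this, Real.volume_Ico]
  congr 1
  field_simp
  ring

theorem volume_ternaryCell (x : ℝ) (k : ℕ) :
    volume (ternaryCell x k) = ENNReal.ofReal ((3 : ℝ) ^ (k + 1))⁻¹ := by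
  rw [ternaryCell_eq]
  exact volume_setOf_floor_mul_eq (by positivity) _

theorem measurableSet_ternaryCell (x : ℝ) (k : ℕ) : MeasurableSet (ternaryCell x k) := by
  rw [ternaryCell_eq]
  exact (Int.measurable_floor.comp (measurable_const.mul measurable_id))
    (measurableSet_singleton _)

theorem pairwise_disjoint_ternaryCell (x : ℝ) :
    Pairwise (Function.onFun Disjoint (ternaryCell x)) :=
  fun _ _ hkl => Set.disjoint_left.2 fun _ hk hl => hkl (hk.2.unique hl.2)

theorem iUnion_ternaryCell {x : ℝ} (hx : x ∈ Set.Ico 0 1) :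
    ⋃ k, ternaryCell x k = {y ∈ Set.Ico 0 1 | ternaryRel x y} := by
  ext y
  simp only [ternaryCell, ternaryRel, LexCyc, Set.mem_iUnion, Set.mem_ofPred_eq,
    Int.floor_eq_zero_iff.2 hx, Int.floor_eq_zero_iff, exists_and_left]

theorem volume_iUnion_ternaryCell (x : ℝ) :
    volume (⋃ k, ternaryCell x k) = ENNReal.ofReal (1 / 2) := by
  have hsum : HasSum (fun k : ℕ => ((3 : ℝ) ^ (k + 1))⁻¹) (1 / 2) := by
    have hf : (fun k : ℕ => ((3 : ℝ) ^ (k + 1))⁻¹) = fun k => 3⁻¹ * 3⁻¹ ^ k :=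
      funext fun k => by rw [pow_succ, mul_inv, inv_pow, mul_comm]
    have h := (hasSum_geometric_of_lt_one (r := (3 : ℝ)⁻¹) (by norm_num)
      (by norm_num)).mul_left 3⁻¹
    rw [hf]
    rwa [show (3 : ℝ)⁻¹ * (1 - 3⁻¹)⁻¹ = 1 / 2 by norm_num] at h
  rw [measure_iUnion (pairwise_disjoint_ternaryCell x) (measurableSet_ternaryCell x)]
  simp_rw [volume_ternaryCell]
  rw [← ENNReal.ofReal_tsum_of_nonneg (fun _ => by positivity) hsum.summable, hsum.tsum_eq]

theorem setIntegral_tournamentonOf_ternaryRel {x : ℝ} (hx : x ∈ Set.Ico 0 1) :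
    ∫ y in I01, tournamentonOf ternaryRel x y = 1 / 2 := by
  have hties : volume {y ∈ Set.Ico 0 1 | ¬ ternaryRel x y ∧ ¬ ternaryRel y x} = 0 := by
    refine measure_mono_null (fun y hy => ?_)
      ((Set.countable_range fun n : ℤ => x - n).measure_zero volume)
    have hd : ternaryDigit x = ternaryDigit y := by
      by_contra hne
      rcases lexCyc_or_lexCyc_of_ne hne with h | h
      exacts [hy.2.1 h, hy.2.2 h]
    obtain ⟨n, hn⟩ := exists_sub_eq_intCast_of_ternaryDigit_eq hd
    exact ⟨n, by linarith⟩
  rw [I01, integral_Icc_eq_integral_Ico,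
    setIntegral_tournamentonOf (R := ternaryRel) measurableSet_Ico
      (measurable_prodMk_left measurableSet_ternaryRel) hties, ← iUnion_ternaryCell hx,
    measureReal_def, volume_iUnion_ternaryCell, ENNReal.toReal_ofReal (by norm_num)]

theorem isRegularT_ternary : IsRegularT (tournamentonOf ternaryRel) := by
  filter_upwards [Measure.ae_ne volume 1] with x hx1 hx
  exact setIntegral_tournamentonOf_ternaryRel ⟨hx.1, hx.2.lt_of_ne hx1⟩

end Ternary

theorem stmt4 {V : Type} [Fintype V] (E : V → V → Prop) (hT : IsTournament E)
    (hnt : ¬ IsTransitive E)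
    (hni : ∀ a b c : ℕ, 0 < a → 0 < b → 0 < c → ¬ IsoToT E a b c) :
    ∃ W : ℝ → ℝ → ℝ, IsTournamenton W ∧ IsRegularT W ∧ homDensity E W = 0 := by
  by_cases hloc : IsLocallyTransitive E
  · refine ⟨tournamentonOf ternaryRel, isTournamenton_ternary, isRegularT_ternary,
      homDensity_eq_zero_of_ae E _ ?_⟩
    filter_upwards [ae_forall_sub_notMem (Set.countable_range ((↑) : ℤ → ℝ))] with x hx
    by_contra! hW
    have hrel : ∀ u v, E u v → ternaryRel (x u) (x v) := fun u v huv =>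
      rel_of_tournamentonOf_ne_zero
        (ternaryRel_or_ternaryRel (hx u v (hT.ne_of_rel huv))) (hW u v huv)
    obtain ⟨a, b, c, ha, hb, hc, hiso⟩ := hT.exists_isoToT_of_lexCyc hnt hloc _ hrel
    exact hni a b c ha hb hc hiso
  · refine ⟨tournamentonOf circleRel, isTournamenton_circle, isRegularT_circle,
      homDensity_eq_zero_of_ae E _ ?_⟩
    filter_upwards [ae_forall_sub_notMem (Set.countable_range fun n : ℤ => (n : ℝ) / 2)]
      with x hx
    by_contra! hW
    exact hloc (isLocallyTransitive_of_circleRel x fun u v huv =>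
      rel_of_tournamentonOf_ne_zero
        (circleRel_or_circleRel (hx u v (hT.ne_of_rel huv))) (hW u v huv))

end
end

section
/- Let W be a tournamenton and let a, b, k be positive integers. Define N⁺_k(x₁,…,x_k) = ∫ ∏_{i∈[k]} W(x_i, z) dz, N⁻_k(x₁,…,x_k) = ∫ ∏_{i∈[k]} W(z, x_i) dz, and, whenever N⁺_k(x) > 0 and N⁻_k(x) > 0, D_k(x₁,…,x_k) = (∫∫ W(y,z) ∏_{i∈[k]} W(x_i, y) W(z, x_i) dy dz) / (N⁺_k(x) N⁻_k(x)) (and D_k(x) = 0 otherwise). Then t(C[a,b,k], W) ≥ ∫_{[0,1]^k} N⁺_k(x)^a · D_k(x)^{ab} · N⁻_k(x)^b dx. -/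
open MeasureTheory

noncomputable section

def Nplus (W : ℝ → ℝ → ℝ) (k : ℕ) (x : Fin k → ℝ) : ℝ :=
  ∫ z in I01, ∏ i, W (x i) z

def Nminus (W : ℝ → ℝ → ℝ) (k : ℕ) (x : Fin k → ℝ) : ℝ :=
  ∫ z in I01, ∏ i, W z (x i)

def Dk (W : ℝ → ℝ → ℝ) (k : ℕ) (x : Fin k → ℝ) : ℝ :=
  if 0 < Nplus W k x ∧ 0 < Nminus W k x then
    (∫ y in I01, ∫ z in I01, W y z * ∏ i, (W (x i) y * W z (x i))) /
      (Nplus W k x * Nminus W k x)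
  else 0

/-!
Fix the images `x` of the `k` vertices of the third part and put `f y = ∏ᵢ W (xᵢ, y)`,
`g z = ∏ᵢ W (z, xᵢ)`. Conditionally on `x`, the density of `C[a,b,k]` is the density of `K_{a,b}`
with vertex weights `f` on the first side and `g` on the second. Writing
`T(y) = ∫ g(z) ∏ⱼ W(yⱼ, z) dz` and `U(z) = ∫ f(y) W(y, z) dy`, this density equals
`∫ ∏ⱼ f(yⱼ) T(y)ᵇ dy`, while `∫ ∏ⱼ f(yⱼ) T(y) dy = ∫ g Uᵃ`, and `∫ g U` is the numerator of `D_k`.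
The weighted power-mean inequality `(∫ w v)^(m+1) ≤ (∫ w)^m ∫ w v^(m+1)`, applied once over `z`
and once over `y`, therefore bounds the conditional density from below by
`N⁺(x)ᵃ D_k(x)ᵃᵇ N⁻(x)ᵇ`; integrating over `x` gives the theorem.
-/

open Finset
open scoped unitInterval

-- The tangent line of `t ↦ t ^ (m + 1)` at `c` lies below the graph (Bernoulli's inequality).
lemma pow_mul_sub_le_pow_succ {c v : ℝ} (hc : 0 < c) (hv : 0 ≤ v) (m : ℕ) :
    c ^ m * ((m + 1) * v - m * c) ≤ v ^ (m + 1) := by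
  have h := one_add_mul_le_pow (a := v / c - 1) (by linarith [div_nonneg hv hc.le]) (m + 1)
  rw [add_sub_cancel, div_pow, le_div_iff₀ (pow_pos hc _)] at h
  calc c ^ m * ((m + 1) * v - m * c) = (1 + (m + 1 : ℕ) * (v / c - 1)) * c ^ (m + 1) := by
        field_simp; push_cast; ring
    _ ≤ v ^ (m + 1) := h

section PowerMean

variable {α : Type*} [MeasurableSpace α] {μ : Measure α} {w v : α → ℝ}

theorem pow_integral_mul_le (hw : 0 ≤ᵐ[μ] w) (hv : 0 ≤ᵐ[μ] v) (hwi : Integrable w μ)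
    (hwv : Integrable (fun x => w x * v x) μ) (m : ℕ)
    (hwvm : Integrable (fun x => w x * v x ^ (m + 1)) μ) :
    (∫ x, w x * v x ∂μ) ^ (m + 1) ≤ (∫ x, w x ∂μ) ^ m * ∫ x, w x * v x ^ (m + 1) ∂μ := by
  set A := ∫ x, w x ∂μ
  set B := ∫ x, w x * v x ∂μ
  have hA : 0 ≤ A := integral_nonneg_of_ae hw
  have hC : 0 ≤ ∫ x, w x * v x ^ (m + 1) ∂μ := integral_nonneg_of_ae <| by
    filter_upwards [hw, hv] with x hwx hvx using mul_nonneg hwx (pow_nonneg hvx _)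
  have hB0 : 0 ≤ B := integral_nonneg_of_ae <| by
    filter_upwards [hw, hv] with x hwx hvx using mul_nonneg hwx hvx
  rcases hB0.eq_or_lt with hB | hB
  · rw [← hB, zero_pow m.succ_ne_zero]; positivity
  have hApos : 0 < A := by
    refine hA.lt_of_ne fun hA0 => hB.ne' ?_
    have hw0 : w =ᵐ[μ] 0 := (integral_eq_zero_iff_of_nonneg_ae hw hwi).1 hA0.symm
    calc B = ∫ _, (0 : ℝ) ∂μ := integral_congr_ae (by filter_upwards [hw0] with x hx; simp [hx])
      _ = 0 := integral_zero _ _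
  -- integrate the tangent-line bound at the `w`-weighted mean `c` of `v`
  set c := B / A
  have hc : 0 < c := div_pos hB hApos
  have hmean : c ^ m * B ≤ ∫ x, w x * v x ^ (m + 1) ∂μ := calc
    c ^ m * B = ∫ x, c ^ m * (m + 1) * (w x * v x) - c ^ m * m * c * w x ∂μ := by
        rw [integral_sub (hwv.const_mul _) (hwi.const_mul _), integral_const_mul,
          integral_const_mul]
        linear_combination (c ^ m * m) * (div_mul_cancel₀ B hApos.ne')
    _ ≤ ∫ x, w x * v x ^ (m + 1) ∂μ := by
        refine integral_mono_ae ((hwv.const_mul _).sub (hwi.const_mul _)) hwvm ?_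
        filter_upwards [hw, hv] with x hwx hvx
        have := mul_le_mul_of_nonneg_left (pow_mul_sub_le_pow_succ hc hvx m) hwx
        linarith
  calc B ^ (m + 1) = A ^ m * (c ^ m * B) := by
        rw [← mul_assoc, ← mul_pow, mul_div_cancel₀ _ hApos.ne', pow_succ]
    _ ≤ A ^ m * ∫ x, w x * v x ^ (m + 1) ∂μ := by gcongr

end PowerMean

section Bounded

variable {α β : Type*} [MeasurableSpace α] [MeasurableSpace β] {μ : Measure α}

lemma integrable_of_ae_mem_unitInterval [IsFiniteMeasure μ] {f : α → ℝ}
    (hf : AEStronglyMeasurable f μ) (h : ∀ᵐ x ∂μ, f x ∈ I) : Integrable f μ :=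
  .of_bound hf 1 (h.mono fun _ hx => by rw [Real.norm_of_nonneg hx.1]; exact hx.2)

lemma ae_forall_mem_pi {ι : Type*} [Fintype ι] [SigmaFinite μ] {s : Set α}
    (hs : ∀ᵐ x ∂μ, x ∈ s) : ∀ᵐ y ∂Measure.pi (fun _ : ι => μ), ∀ i, y i ∈ s :=
  Filter.eventually_all.2 fun _ => Measure.tendsto_eval_ae_ae.eventually hs

lemma ae_prod_of_ae_of_ae {ν : Measure β} [SFinite ν] {p : α → Prop} {q : β → Prop}
    (hp : ∀ᵐ x ∂μ, p x) (hq : ∀ᵐ y ∂ν, q y) : ∀ᵐ z ∂μ.prod ν, p z.1 ∧ q z.2 :=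
  (Measure.quasiMeasurePreserving_fst.ae hp).and (Measure.quasiMeasurePreserving_snd.ae hq)

end Bounded

section BipartiteDensity

variable {α : Type*} [MeasurableSpace α]

def bipartiteIntegrand (f g : α → ℝ) (K : α → α → ℝ) {a b : ℕ}
    (p : (Fin a → α) × (Fin b → α)) : ℝ :=
  (∏ j, f (p.1 j)) * (∏ l, g (p.2 l)) * ∏ j, ∏ l, K (p.1 j) (p.2 l)

def bipartiteDensity (μ : Measure α) (f g : α → ℝ) (K : α → α → ℝ) (a b : ℕ) : ℝ :=
  ∫ p : (Fin a → α) × (Fin b → α), bipartiteIntegrand f g K p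
    ∂(Measure.pi fun _ => μ).prod (Measure.pi fun _ => μ)

variable {μ : Measure α} [IsFiniteMeasure μ] {s : Set α} {f g : α → ℝ} {K : α → α → ℝ}

lemma integral_bipartiteIntegrand_mk (y : Fin a → α) (b : ℕ) :
    ∫ z, bipartiteIntegrand f g K (y, z) ∂(Measure.pi fun _ : Fin b => μ) =
      (∏ j, f (y j)) * (∫ z, g z * ∏ j, K (y j) z ∂μ) ^ b := by
  have hpow := integral_fintype_prod_eq_pow (ι := Fin b) (μ := μ)
    (fun z => g z * ∏ j, K (y j) z)
  rw [Fintype.card_fin] at hpow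
  rw [← hpow, ← integral_const_mul]
  congr 1 with z
  rw [bipartiteIntegrand, prod_mul_distrib, prod_comm (s := univ) (t := univ)]
  ring

lemma integral_prod_mul_mul_prod_eq (z : α) (a : ℕ) :
    ∫ y, (∏ j, f (y j)) * (g z * ∏ j, K (y j) z) ∂(Measure.pi fun _ : Fin a => μ) =
      g z * (∫ y, f y * K y z ∂μ) ^ a := by
  have hpow := integral_fintype_prod_eq_pow (ι := Fin a) (μ := μ) (fun y => f y * K y z)
  rw [Fintype.card_fin] at hpow
  rw [← hpow, ← integral_const_mul]
  congr 1 with y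
  rw [prod_mul_distrib]
  ring

lemma bipartiteDensity_nonneg (hs : ∀ᵐ x ∂μ, x ∈ s) (hf : ∀ x ∈ s, 0 ≤ f x)
    (hg : ∀ x ∈ s, 0 ≤ g x) (hK : ∀ x ∈ s, ∀ y ∈ s, 0 ≤ K x y) (a b : ℕ) :
    0 ≤ bipartiteDensity μ f g K a b := by
  refine integral_nonneg_of_ae ?_
  filter_upwards [ae_prod_of_ae_of_ae (ae_forall_mem_pi hs) (ae_forall_mem_pi hs)]
    with p ⟨hy, hz⟩
  exact mul_nonneg (mul_nonneg (prod_nonneg fun j _ => hf _ (hy j))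
    (prod_nonneg fun l _ => hg _ (hz l)))
    (prod_nonneg fun j _ => prod_nonneg fun l _ => hK _ (hy j) _ (hz l))

variable (hs : ∀ᵐ x ∂μ, x ∈ s) (hfm : Measurable f) (hgm : Measurable g)
  (hKm : Measurable (Function.uncurry K)) (hf : ∀ x ∈ s, f x ∈ I) (hg : ∀ x ∈ s, g x ∈ I)
  (hK : ∀ x ∈ s, ∀ y ∈ s, K x y ∈ I)
include hs hfm hgm hKm hf hg hK

lemma integrable_bipartiteIntegrand (a b : ℕ) :
    Integrable (bipartiteIntegrand f g K (a := a) (b := b))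
      ((Measure.pi fun _ => μ).prod (Measure.pi fun _ => μ)) := by
  refine integrable_of_ae_mem_unitInterval (by unfold bipartiteIntegrand; fun_prop) ?_
  filter_upwards [ae_prod_of_ae_of_ae (ae_forall_mem_pi hs) (ae_forall_mem_pi hs)]
    with p ⟨hy, hz⟩
  exact unitInterval.mul_mem
    (unitInterval.mul_mem (unitInterval.prod_mem fun j _ => hf _ (hy j))
      (unitInterval.prod_mem fun l _ => hg _ (hz l)))
    (unitInterval.prod_mem fun j _ => unitInterval.prod_mem fun l _ => hK _ (hy j) _ (hz l))

lemma integrable_prod_mul_mul_prod (a : ℕ) :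
    Integrable (Function.uncurry fun (y : Fin a → α) z =>
      (∏ j, f (y j)) * (g z * ∏ j, K (y j) z)) ((Measure.pi fun _ => μ).prod μ) := by
  refine integrable_of_ae_mem_unitInterval (by fun_prop) ?_
  filter_upwards [ae_prod_of_ae_of_ae (ae_forall_mem_pi hs) hs] with p ⟨hy, hz⟩
  exact unitInterval.mul_mem (unitInterval.prod_mem fun j _ => hf _ (hy j))
    (unitInterval.mul_mem (hg _ hz) (unitInterval.prod_mem fun j _ => hK _ (hy j) _ hz))

lemma bipartiteDensity_eq_integral_mul_pow (a b : ℕ) :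
    bipartiteDensity μ f g K a b =
      ∫ y, (∏ j, f (y j)) * (∫ z, g z * ∏ j, K (y j) z ∂μ) ^ b
        ∂(Measure.pi fun _ : Fin a => μ) := by
  rw [bipartiteDensity,
    integral_prod _ (integrable_bipartiteIntegrand hs hfm hgm hKm hf hg hK a b)]
  simp_rw [integral_bipartiteIntegrand_mk]

lemma integral_prod_mul_integral_eq (a : ℕ) :
    ∫ y, (∏ j, f (y j)) * (∫ z, g z * ∏ j, K (y j) z ∂μ) ∂(Measure.pi fun _ : Fin a => μ) =
      ∫ z, g z * (∫ y, f y * K y z ∂μ) ^ a ∂μ := by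
  simp_rw [← integral_const_mul]
  rw [integral_integral_swap (integrable_prod_mul_mul_prod hs hfm hgm hKm hf hg hK a)]
  simp_rw [integral_prod_mul_mul_prod_eq]

lemma pow_integral_integral_le (a : ℕ) :
    (∫ y, ∫ z, f y * K y z * g z ∂μ ∂μ) ^ (a + 1) ≤
      (∫ z, g z ∂μ) ^ a * ∫ y, (∏ j, f (y j)) * (∫ z, g z * ∏ j, K (y j) z ∂μ)
        ∂(Measure.pi fun _ : Fin (a + 1) => μ) := by
  have hfKg : Integrable (Function.uncurry fun y z => f y * K y z * g z) (μ.prod μ) := by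
    refine integrable_of_ae_mem_unitInterval (by fun_prop) ?_
    filter_upwards [ae_prod_of_ae_of_ae hs hs] with p ⟨hy, hz⟩
    exact unitInterval.mul_mem (unitInterval.mul_mem (hf _ hy) (hK _ hy _ hz)) (hg _ hz)
  have hU : 0 ≤ᵐ[μ] fun z => ∫ y, f y * K y z ∂μ := by
    filter_upwards [hs] with z hz
    refine integral_nonneg_of_ae ?_
    filter_upwards [hs] with y hy using (unitInterval.mul_mem (hf _ hy) (hK _ hy _ hz)).1
  have hgU : Integrable (fun z => g z * ∫ y, f y * K y z ∂μ) μ := by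
    refine hfKg.integral_prod_right.congr (.of_forall fun z => ?_)
    simp only [Function.uncurry_apply_pair]
    rw [integral_mul_const, mul_comm]
  have hgUa := (integrable_prod_mul_mul_prod hs hfm hgm hKm hf hg hK (a + 1)).integral_prod_right
  simp only [Function.uncurry_apply_pair, integral_prod_mul_mul_prod_eq] at hgUa
  have hpm := pow_integral_mul_le (hs.mono fun z hz => (hg z hz).1) hU
    (integrable_of_ae_mem_unitInterval hgm.aestronglyMeasurable (hs.mono hg)) hgU a hgUa
  have hS : ∫ y, ∫ z, f y * K y z * g z ∂μ ∂μ = ∫ z, g z * ∫ y, f y * K y z ∂μ ∂μ := by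
    rw [integral_integral_swap hfKg]
    congr 1 with z
    rw [integral_mul_const, mul_comm]
  rwa [hS, integral_prod_mul_integral_eq hs hfm hgm hKm hf hg hK]

lemma pow_integral_prod_mul_integral_le (a b : ℕ) :
    (∫ y, (∏ j, f (y j)) * (∫ z, g z * ∏ j, K (y j) z ∂μ) ∂(Measure.pi fun _ : Fin a => μ)) ^
        (b + 1) ≤
      (∫ y, f y ∂μ) ^ (a * b) * bipartiteDensity μ f g K a (b + 1) := by
  have hP := ae_forall_mem_pi (ι := Fin a) hs
  have hw : 0 ≤ᵐ[Measure.pi fun _ : Fin a => μ] fun y => ∏ j, f (y j) := by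
    filter_upwards [hP] with y hy using (unitInterval.prod_mem fun j _ => hf _ (hy j)).1
  have hT : 0 ≤ᵐ[Measure.pi fun _ : Fin a => μ] fun y => ∫ z, g z * ∏ j, K (y j) z ∂μ := by
    filter_upwards [hP] with y hy
    refine integral_nonneg_of_ae ?_
    filter_upwards [hs] with z hz using
      (unitInterval.mul_mem (hg _ hz) (unitInterval.prod_mem fun j _ => hK _ (hy j) _ hz)).1
  have hwT := (integrable_prod_mul_mul_prod hs hfm hgm hKm hf hg hK a).integral_prod_left
  simp only [Function.uncurry_apply_pair, integral_const_mul] at hwT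
  have hwTb := (integrable_bipartiteIntegrand hs hfm hgm hKm hf hg hK a (b + 1)).integral_prod_left
  simp only [integral_bipartiteIntegrand_mk] at hwTb
  have hwi : Integrable (fun y => ∏ j, f (y j)) (Measure.pi fun _ : Fin a => μ) :=
    integrable_of_ae_mem_unitInterval
      (by fun_prop : Measurable fun y : Fin a → α => ∏ j, f (y j)).aestronglyMeasurable
      (hP.mono fun y hy => unitInterval.prod_mem fun j _ => hf _ (hy j))
  have hpm := pow_integral_mul_le hw hT hwi hwT b hwTb
  have hpow := integral_fintype_prod_eq_pow (ι := Fin a) f (μ := μ)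
  rw [Fintype.card_fin] at hpow
  rwa [hpow, ← pow_mul, ← bipartiteDensity_eq_integral_mul_pow hs hfm hgm hKm hf hg hK] at hpm

theorem pow_integral_integral_le_bipartiteDensity (a b : ℕ) :
    (∫ y, ∫ z, f y * K y z * g z ∂μ ∂μ) ^ ((a + 1) * (b + 1)) ≤
      (∫ y, f y ∂μ) ^ ((a + 1) * b) * (∫ z, g z ∂μ) ^ (a * (b + 1)) *
        bipartiteDensity μ f g K (a + 1) (b + 1) := by
  have hS : 0 ≤ (∫ y, ∫ z, f y * K y z * g z ∂μ ∂μ) ^ (a + 1) := by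
    refine pow_nonneg (integral_nonneg_of_ae ?_) _
    filter_upwards [hs] with y hy
    refine integral_nonneg_of_ae ?_
    filter_upwards [hs] with z hz using
      (unitInterval.mul_mem (unitInterval.mul_mem (hf _ hy) (hK _ hy _ hz)) (hg _ hz)).1
  have hg0 : 0 ≤ (∫ z, g z ∂μ) ^ a :=
    pow_nonneg (integral_nonneg_of_ae (hs.mono fun z hz => (hg z hz).1)) _
  calc (∫ y, ∫ z, f y * K y z * g z ∂μ ∂μ) ^ ((a + 1) * (b + 1))
      = ((∫ y, ∫ z, f y * K y z * g z ∂μ ∂μ) ^ (a + 1)) ^ (b + 1) := pow_mul _ _ _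
    _ ≤ ((∫ z, g z ∂μ) ^ a * ∫ y, (∏ j, f (y j)) * (∫ z, g z * ∏ j, K (y j) z ∂μ)
          ∂(Measure.pi fun _ : Fin (a + 1) => μ)) ^ (b + 1) :=
        pow_le_pow_left₀ hS (pow_integral_integral_le hs hfm hgm hKm hf hg hK a) _
    _ ≤ (∫ z, g z ∂μ) ^ (a * (b + 1)) *
          ((∫ y, f y ∂μ) ^ ((a + 1) * b) * bipartiteDensity μ f g K (a + 1) (b + 1)) := by
        rw [mul_pow, pow_mul]
        gcongr
        exact pow_integral_prod_mul_integral_le hs hfm hgm hKm hf hg hK _ b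
    _ = _ := by ring

end BipartiteDensity

lemma mul_div_pow_mul_le {p q S t : ℝ} (hp : 0 < p) (hq : 0 < q) {a b : ℕ}
    (h : S ^ ((a + 1) * (b + 1)) ≤ p ^ ((a + 1) * b) * q ^ (a * (b + 1)) * t) :
    p ^ (a + 1) * (S / (p * q)) ^ ((a + 1) * (b + 1)) * q ^ (b + 1) ≤ t := by
  have hp' : p ^ ((a + 1) * (b + 1)) = p ^ (a + 1) * p ^ ((a + 1) * b) := by ring
  have hq' : q ^ ((a + 1) * (b + 1)) = q ^ (b + 1) * q ^ (a * (b + 1)) := by ring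
  rw [div_pow, mul_pow, hp', hq']
  have hp₁ : 0 < p ^ (a + 1) := by positivity
  have hq₁ : 0 < q ^ (b + 1) := by positivity
  have hp₂ : 0 < p ^ ((a + 1) * b) := by positivity
  have hq₂ : 0 < q ^ (a * (b + 1)) := by positivity
  generalize p ^ (a + 1) = p₁, q ^ (b + 1) = q₁, p ^ ((a + 1) * b) = p₂,
    q ^ (a * (b + 1)) = q₂, S ^ ((a + 1) * (b + 1)) = S' at *
  rw [show p₁ * (S' / (p₁ * p₂ * (q₁ * q₂))) * q₁ = S' / (p₂ * q₂) by field_simp,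
    div_le_iff₀ (by positivity)]
  linarith

lemma measurePreserving_sumElim_sumElim {α ι₁ ι₂ ι₃ : Type*} [MeasurableSpace α] [Fintype ι₁]
    [Fintype ι₂] [Fintype ι₃] (μ : Measure α) [SigmaFinite μ] :
    MeasurePreserving
      (fun q : (ι₃ → α) × (ι₁ → α) × (ι₂ → α) => Sum.elim q.2.1 (Sum.elim q.2.2 q.1))
      ((Measure.pi fun _ => μ).prod ((Measure.pi fun _ => μ).prod (Measure.pi fun _ => μ)))
      (Measure.pi fun _ : ι₁ ⊕ ι₂ ⊕ ι₃ => μ) :=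
  (measurePreserving_sumPiEquivProdPi_symm fun _ : ι₁ ⊕ ι₂ ⊕ ι₃ => μ).comp
    (((MeasurePreserving.id _).prod (measurePreserving_sumPiEquivProdPi_symm _)).comp
      ((measurePreserving_prodAssoc _ _ _).comp Measure.measurePreserving_swap))

section CyclicBlowup

instance : IsFiniteMeasure (volume.restrict I01) :=
  isFiniteMeasure_restrict.2 (by simp [I01, Real.volume_Icc])

lemma setIntegral_univ_pi_I01 {ι : Type*} [Fintype ι] (F : (ι → ℝ) → ℝ) :
    ∫ x in Set.univ.pi (fun _ : ι => I01), F x =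
      ∫ x, F x ∂(Measure.pi fun _ => volume.restrict I01) := by
  rw [volume_pi, Measure.restrict_pi_pi]

open scoped Classical in
lemma prod_filter_CEdge (a b k : ℕ) (F : CV a b k → CV a b k → ℝ) :
    ∏ p ∈ univ.filter (fun p : CV a b k × CV a b k => CEdge a b k p.1 p.2), F p.1 p.2 =
      (∏ j, ∏ l, F (.inl j) (.inr (.inl l))) * (∏ l, ∏ i, F (.inr (.inl l)) (.inr (.inr i))) *
        ∏ i, ∏ j, F (.inr (.inr i)) (.inl j) := by
  rw [prod_filter, ← univ_product_univ, prod_product]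
  simp only [Fintype.prod_sum_type, CEdge, cpart]
  norm_num [Fin.ext_iff]
  simp +decide
  ring

def outWeight {α ι : Type*} [Fintype ι] (W : α → α → ℝ) (x : ι → α) (y : α) : ℝ :=
  ∏ i, W (x i) y

def inWeight {α ι : Type*} [Fintype ι] (W : α → α → ℝ) (x : ι → α) (z : α) : ℝ :=
  ∏ i, W z (x i)

variable {W : ℝ → ℝ → ℝ}

lemma IsTournamenton.mem_unitInterval (hW : IsTournamenton W) :
    ∀ x ∈ I01, ∀ y ∈ I01, W x y ∈ I :=
  fun x hx y hy => ⟨(hW.2 x hx y hy).1, (hW.2 x hx y hy).2.1⟩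

lemma integrable_bipartiteIntegrand_outWeight_inWeight (hWm : Measurable (Function.uncurry W))
    (hW : ∀ x ∈ I01, ∀ y ∈ I01, W x y ∈ I) (a b k : ℕ) :
    Integrable (fun q : (Fin k → ℝ) × (Fin a → ℝ) × (Fin b → ℝ) =>
        bipartiteIntegrand (outWeight W q.1) (inWeight W q.1) W q.2)
      ((Measure.pi fun _ => volume.restrict I01).prod
        ((Measure.pi fun _ => volume.restrict I01).prod
          (Measure.pi fun _ => volume.restrict I01))) := by
  have hI : ∀ᵐ t ∂volume.restrict I01, t ∈ I01 := ae_restrict_mem measurableSet_Icc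
  refine integrable_of_ae_mem_unitInterval
    (by unfold bipartiteIntegrand outWeight inWeight; fun_prop) ?_
  filter_upwards [ae_prod_of_ae_of_ae (ae_forall_mem_pi hI)
    (ae_prod_of_ae_of_ae (ae_forall_mem_pi hI) (ae_forall_mem_pi hI))] with q ⟨hx, hy, hz⟩
  exact unitInterval.mul_mem (unitInterval.mul_mem
    (unitInterval.prod_mem fun j _ => unitInterval.prod_mem fun i _ => hW _ (hx i) _ (hy j))
    (unitInterval.prod_mem fun l _ => unitInterval.prod_mem fun i _ => hW _ (hz l) _ (hx i)))
    (unitInterval.prod_mem fun j _ => unitInterval.prod_mem fun l _ => hW _ (hy j) _ (hz l))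

lemma homDensity_CEdge_eq (hWm : Measurable (Function.uncurry W))
    (hW : ∀ x ∈ I01, ∀ y ∈ I01, W x y ∈ I) (a b k : ℕ) :
    homDensity (CEdge a b k) W =
      ∫ x, bipartiteDensity (volume.restrict I01) (outWeight W x) (inWeight W x) W a b
        ∂(Measure.pi fun _ : Fin k => volume.restrict I01) := by
  have hΦ := measurePreserving_sumElim_sumElim (ι₁ := Fin a) (ι₂ := Fin b) (ι₃ := Fin k)
    (volume.restrict I01)
  rw [homDensity, setIntegral_univ_pi_I01, ← hΦ.map_eq,
    integral_map hΦ.measurable.aemeasurable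
      (measurable_prod _ fun _ _ => by fun_prop).aestronglyMeasurable]
  refine Eq.trans ?_
    (integral_prod _ (integrable_bipartiteIntegrand_outWeight_inWeight hWm hW a b k))
  congr 1 with ⟨x, y, z⟩
  dsimp only
  rw [prod_filter_CEdge a b k fun u v =>
    W (Sum.elim y (Sum.elim z x) u) (Sum.elim y (Sum.elim z x) v)]
  simp only [Sum.elim_inl, Sum.elim_inr, bipartiteIntegrand, outWeight, inWeight]
  rw [prod_comm (s := univ) (t := univ) (f := fun i j => W (x i) (y j))]
  ring

lemma Nplus_nonneg (hW : ∀ x ∈ I01, ∀ y ∈ I01, W x y ∈ I) {k : ℕ} {x : Fin k → ℝ}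
    (hx : ∀ i, x i ∈ I01) : 0 ≤ Nplus W k x :=
  setIntegral_nonneg measurableSet_Icc fun _ hz => prod_nonneg fun i _ => (hW _ (hx i) _ hz).1

lemma Nminus_nonneg (hW : ∀ x ∈ I01, ∀ y ∈ I01, W x y ∈ I) {k : ℕ} {x : Fin k → ℝ}
    (hx : ∀ i, x i ∈ I01) : 0 ≤ Nminus W k x :=
  setIntegral_nonneg measurableSet_Icc fun _ hz => prod_nonneg fun i _ => (hW _ hz _ (hx i)).1

lemma Dk_nonneg (hW : ∀ x ∈ I01, ∀ y ∈ I01, W x y ∈ I) {k : ℕ} {x : Fin k → ℝ}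
    (hx : ∀ i, x i ∈ I01) : 0 ≤ Dk W k x := by
  rw [Dk]
  split_ifs with h
  · refine div_nonneg (setIntegral_nonneg measurableSet_Icc fun y hy => ?_)
      (mul_pos h.1 h.2).le
    refine setIntegral_nonneg measurableSet_Icc fun z hz => ?_
    exact mul_nonneg (hW _ hy _ hz).1
      (prod_nonneg fun i _ => mul_nonneg (hW _ (hx i) _ hy).1 (hW _ hz _ (hx i)).1)
  · exact le_rfl

lemma Nplus_pow_mul_Dk_pow_mul_Nminus_pow_le (hWm : Measurable (Function.uncurry W))
    (hW : ∀ x ∈ I01, ∀ y ∈ I01, W x y ∈ I) {k : ℕ} {x : Fin k → ℝ} (hx : ∀ i, x i ∈ I01)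
    (a b : ℕ) :
    Nplus W k x ^ (a + 1) * Dk W k x ^ ((a + 1) * (b + 1)) * Nminus W k x ^ (b + 1) ≤
      bipartiteDensity (volume.restrict I01) (outWeight W x) (inWeight W x) W (a + 1) (b + 1) := by
  by_cases h : 0 < Nplus W k x ∧ 0 < Nminus W k x
  · have hnum : ∫ y in I01, ∫ z in I01, W y z * ∏ i, (W (x i) y * W z (x i)) =
        ∫ y in I01, ∫ z in I01, outWeight W x y * W y z * inWeight W x z := by
      simp_rw [outWeight, inWeight, prod_mul_distrib]
      congr 1 with y
      congr 1 with z
      ring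
    rw [Dk, if_pos h, hnum]
    refine mul_div_pow_mul_le h.1 h.2 ?_
    exact pow_integral_integral_le_bipartiteDensity (ae_restrict_mem measurableSet_Icc)
      (by fun_prop) (by fun_prop) hWm
      (fun y hy => unitInterval.prod_mem fun i _ => hW _ (hx i) _ hy)
      (fun z hz => unitInterval.prod_mem fun i _ => hW _ hz _ (hx i)) hW a b
  · rw [Dk, if_neg h, zero_pow (by positivity), mul_zero, zero_mul]
    exact bipartiteDensity_nonneg (ae_restrict_mem measurableSet_Icc)
      (fun y hy => prod_nonneg fun i _ => (hW _ (hx i) _ hy).1)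
      (fun z hz => prod_nonneg fun i _ => (hW _ hz _ (hx i)).1)
      (fun y hy z hz => (hW y hy z hz).1) _ _

end CyclicBlowup

theorem stmt7_general (W : ℝ → ℝ → ℝ) (hW : IsTournamenton W)
    (a b k : ℕ) (ha : 0 < a) (hb : 0 < b) :
    (∫ x in Set.univ.pi (fun _ : Fin k => I01),
        Nplus W k x ^ a * Dk W k x ^ (a * b) * Nminus W k x ^ b) ≤
      homDensity (CEdge a b k) W := by
  obtain ⟨a, rfl⟩ := Nat.exists_eq_add_one_of_ne_zero ha.ne'
  obtain ⟨b, rfl⟩ := Nat.exists_eq_add_one_of_ne_zero hb.ne'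
  have hWI := hW.mem_unitInterval
  have hx : ∀ᵐ x ∂(Measure.pi fun _ : Fin k => volume.restrict I01), ∀ i, x i ∈ I01 :=
    ae_forall_mem_pi (ae_restrict_mem measurableSet_Icc)
  rw [setIntegral_univ_pi_I01, homDensity_CEdge_eq hW.1 hWI]
  refine integral_mono_of_nonneg ?_
    (integrable_bipartiteIntegrand_outWeight_inWeight hW.1 hWI _ _ k).integral_prod_left ?_
  · filter_upwards [hx] with x hx
    have := Nplus_nonneg hWI hx
    have := Nminus_nonneg hWI hx
    have := Dk_nonneg hWI hx
    positivity
  · filter_upwards [hx] with x hx using Nplus_pow_mul_Dk_pow_mul_Nminus_pow_le hW.1 hWI hx a b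

theorem stmt7 (W : ℝ → ℝ → ℝ) (hW : IsTournamenton W)
    (a b k : ℕ) (ha : 0 < a) (hb : 0 < b) (hk : 0 < k) :
    (∫ x in Set.univ.pi (fun _ : Fin k => I01),
        Nplus W k x ^ a * Dk W k x ^ (a * b) * Nminus W k x ^ b) ≤
      homDensity (CEdge a b k) W :=
  stmt7_general W hW a b k ha hb

end
end

section
/- Let H be a finite simple digraph containing an independent set A of vertices that are pairwise twins, and let H' be the digraph obtained from H by adding a transitive tournament on the vertex set A. Then for every tournamenton W it holds that t(H', W) ≥ 2^(-(|A| choose 2)) · t(H, W). -/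
/-!
Fix the positions `x` of the vertices outside `A`. Since the vertices of `A` are independent
twins, the integrand of `t(H, W)` factors as `C(x) · ∏_{a ∈ A} φ(x_a)`, where `φ(z)` collects the
edges of one vertex of `A` placed at `z`. Let `b` be the last vertex of `A` and `n = |A| - 1`.
Adding the edges from `A \ {b}` to `b` replaces `(∫ φ)^(n+1)` by `∫ φ(y) d(y)^n dy` with
`d(y) = ∫ φ(z) W(z, y) dz`. Since `W(z, y) + W(y, z) = 1`, `S = ∫ φ` satisfies `S² = 2 ∫ φ d`,
and Jensen's inequality for the weight `φ` gives `(∫ φ d)^n ≤ S^(n-1) ∫ φ d^n`; together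
`S^(n+1) ≤ 2^n ∫ φ d^n`. In the new digraph `A \ {b}` is again a set of independent twins, so
induction on `|A|` yields the factor `2^(|A| choose 2)`.
-/

open MeasureTheory

noncomputable section

open scoped ENNReal
open Finset

def unitMeasure : Measure ℝ := volume.restrict I01

instance : IsProbabilityMeasure unitMeasure :=
  ⟨by simp [unitMeasure, I01, Real.volume_Icc]⟩

/-- `W` as an `ℝ≥0∞`-valued weight, clamped so that it is bounded by `1` everywhere and
not only on `[0,1]²`, where it agrees with `W`. -/
def edgeWeight (W : ℝ → ℝ → ℝ) (z y : ℝ) : ℝ≥0∞ := min 1 (ENNReal.ofReal (W z y))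

section EdgeWeight

variable {W : ℝ → ℝ → ℝ}

theorem edgeWeight_le_one (z y : ℝ) : edgeWeight W z y ≤ 1 := min_le_left _ _

theorem IsTournamenton.edgeWeight_eq (hW : IsTournamenton W) {z y : ℝ} (hz : z ∈ I01)
    (hy : y ∈ I01) : edgeWeight W z y = ENNReal.ofReal (W z y) :=
  min_eq_right (ENNReal.ofReal_le_one.2 (hW.2 z hz y hy).2.1)

theorem IsTournamenton.edgeWeight_add_edgeWeight_swap (hW : IsTournamenton W) {z y : ℝ}
    (hz : z ∈ I01) (hy : y ∈ I01) : edgeWeight W z y + edgeWeight W y z = 1 := by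
  obtain ⟨h₀, -, hsum⟩ := hW.2 z hz y hy
  rw [hW.edgeWeight_eq hz hy, hW.edgeWeight_eq hy hz,
    ← ENNReal.ofReal_add h₀ (hW.2 y hy z hz).1, hsum, ENNReal.ofReal_one]

theorem IsTournamenton.ae_edgeWeight_add_edgeWeight_swap (hW : IsTournamenton W) :
    ∀ᵐ y ∂unitMeasure, ∀ᵐ z ∂unitMeasure, edgeWeight W z y + edgeWeight W y z = 1 := by
  filter_upwards [ae_restrict_mem measurableSet_Icc] with y hy
  filter_upwards [ae_restrict_mem measurableSet_Icc] with z hz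
  exact hW.edgeWeight_add_edgeWeight_swap hz hy

theorem Measurable.edgeWeight {α : Type*} [MeasurableSpace α] (hW : IsTournamenton W)
    {f g : α → ℝ} (hf : Measurable f) (hg : Measurable g) :
    Measurable fun a => edgeWeight W (f a) (g a) :=
  measurable_const.min (ENNReal.measurable_ofReal.comp (hW.1.comp (hf.prodMk hg)))

end EdgeWeight

open scoped Classical in
def homIntegrand {V : Type} [Fintype V] (E : V → V → Prop) (W : ℝ → ℝ → ℝ) (x : V → ℝ) :
    ℝ≥0∞ :=
  ∏ p ∈ univ.filter (fun p : V × V => E p.1 p.2), edgeWeight W (x p.1) (x p.2)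

/-- `homDensity` as an `ℝ≥0∞`-valued integral, for which Tonelli's theorem and iterated
marginals need no integrability side conditions. -/
def lhomDensity {V : Type} [Fintype V] (E : V → V → Prop) (W : ℝ → ℝ → ℝ) : ℝ≥0∞ :=
  ∫⁻ x, homIntegrand E W x ∂Measure.pi fun _ : V => unitMeasure

section HomIntegrand

variable {V : Type} [Fintype V] {W : ℝ → ℝ → ℝ}

theorem measurable_homIntegrand (E : V → V → Prop) (hW : IsTournamenton W) :
    Measurable (homIntegrand E W) :=
  Finset.measurable_prod _ fun p _ =>
    (measurable_pi_apply p.1).edgeWeight hW (measurable_pi_apply p.2)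

theorem lhomDensity_le_one (E : V → V → Prop) : lhomDensity E W ≤ 1 := by
  calc lhomDensity E W ≤ ∫⁻ _, 1 ∂Measure.pi fun _ : V => unitMeasure :=
        lintegral_mono fun x => prod_le_one (fun _ _ => zero_le) fun _ _ => edgeWeight_le_one _ _
    _ = 1 := by simp

theorem homDensity_eq_toReal_lhomDensity (E : V → V → Prop) (hW : IsTournamenton W) :
    homDensity E W = (lhomDensity E W).toReal := by
  have hbox : ∀ᵐ x ∂(volume : Measure (V → ℝ)).restrict (Set.univ.pi fun _ => I01),
      ∀ v, x v ∈ I01 := by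
    filter_upwards [ae_restrict_mem (MeasurableSet.univ_pi fun _ => measurableSet_Icc)]
      with x hx using by simpa using hx
  have hpi : (volume : Measure (V → ℝ)).restrict (Set.univ.pi fun _ => I01)
      = Measure.pi fun _ => unitMeasure := by
    rw [volume_pi, Measure.restrict_pi_pi]
    rfl
  rw [homDensity, integral_eq_lintegral_of_nonneg_ae, lhomDensity, ← hpi]
  · refine congrArg ENNReal.toReal (lintegral_congr_ae ?_)
    filter_upwards [hbox] with x hx
    rw [ENNReal.ofReal_prod_of_nonneg fun p _ => (hW.2 _ (hx p.1) _ (hx p.2)).1]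
    exact prod_congr rfl fun p _ => (hW.edgeWeight_eq (hx p.1) (hx p.2)).symm
  · filter_upwards [hbox] with x hx
    exact prod_nonneg fun p _ => (hW.2 _ (hx p.1) _ (hx p.2)).1
  · refine (Finset.measurable_prod _ fun p _ => ?_).aestronglyMeasurable
    exact (hW.1.comp ((measurable_pi_apply p.1).prodMk (measurable_pi_apply p.2)) :
      Measurable fun x : V → ℝ => Function.uncurry W (x p.1, x p.2))

end HomIntegrand

section Tournament

variable {X : Type*} [MeasurableSpace X] {μ : Measure X}

theorem lintegral_mul_pow_succ_le {Φ d : X → ℝ≥0∞} (hΦ : AEMeasurable Φ μ)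
    (hd : AEMeasurable d μ) (n : ℕ) :
    (∫⁻ y, Φ y * d y ∂μ) ^ (n + 1) ≤ (∫⁻ y, Φ y ∂μ) ^ n * ∫⁻ y, Φ y * d y ^ (n + 1) ∂μ := by
  have hn : (n + 1 : ℝ) ≠ 0 := by positivity
  set p : ℝ := 1 / (n + 1)
  set q : ℝ := n / (n + 1)
  have hpq : p + q = 1 := by simp only [p, q]; field_simp; ring
  have hholder := ENNReal.lintegral_mul_norm_pow_le (hΦ.mul (hd.pow_const (n + 1))) hΦ
    (by positivity : 0 ≤ p) (by positivity : 0 ≤ q) hpq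
  have hintegrand : ∀ y, (Φ y * d y ^ (n + 1)) ^ p * Φ y ^ q = Φ y * d y := fun y => by
    rw [ENNReal.mul_rpow_of_nonneg _ _ (by positivity), ← ENNReal.rpow_natCast,
      ← ENNReal.rpow_mul, mul_right_comm,
      ← ENNReal.rpow_add_of_nonneg _ _ (by positivity) (by positivity), hpq]
    simp [p, hn]
  simp only [Pi.mul_apply, hintegrand] at hholder
  calc (∫⁻ y, Φ y * d y ∂μ) ^ (n + 1)
      ≤ ((∫⁻ y, Φ y * d y ^ (n + 1) ∂μ) ^ p * (∫⁻ y, Φ y ∂μ) ^ q) ^ (n + 1) :=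
        pow_le_pow_left' hholder _
    _ = (∫⁻ y, Φ y ∂μ) ^ n * ∫⁻ y, Φ y * d y ^ (n + 1) ∂μ := by
        rw [← ENNReal.rpow_natCast, ENNReal.mul_rpow_of_nonneg _ _ (by positivity),
          ← ENNReal.rpow_mul, ← ENNReal.rpow_mul, mul_comm]
        congr 1 <;> simp [p, q, hn]

theorem lintegral_mul_self_eq_two_mul [SFinite μ] {Φ : X → ℝ≥0∞} (hΦ : Measurable Φ)
    {u : X → X → ℝ≥0∞} (hu : Measurable fun q : X × X => u q.1 q.2)
    (hsum : ∀ᵐ y ∂μ, ∀ᵐ z ∂μ, u z y + u y z = 1) :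
    (∫⁻ y, Φ y ∂μ) * ∫⁻ y, Φ y ∂μ = 2 * ∫⁻ y, Φ y * ∫⁻ z, Φ z * u z y ∂μ ∂μ := by
  have hu' : Measurable fun q : X × X => u q.2 q.1 := hu.comp measurable_swap
  have hu_left : ∀ y, Measurable fun z => u z y := fun y =>
    hu.comp (f := fun z => (z, y)) (measurable_id.prodMk measurable_const)
  have hswap : ∫⁻ y, ∫⁻ z, Φ y * (Φ z * u y z) ∂μ ∂μ = ∫⁻ y, ∫⁻ z, Φ y * (Φ z * u z y) ∂μ ∂μ := by
    rw [lintegral_lintegral_swap ((hΦ.comp measurable_fst).mul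
      ((hΦ.comp measurable_snd).mul hu)).aemeasurable]
    exact lintegral_congr fun _ => lintegral_congr fun _ => by ring
  have hsplit : ∀ᵐ y ∂μ, Φ y * ∫⁻ z, Φ z ∂μ
      = ∫⁻ z, Φ y * (Φ z * u z y) ∂μ + ∫⁻ z, Φ y * (Φ z * u y z) ∂μ := by
    filter_upwards [hsum] with y hy
    have hm : Measurable fun z => Φ y * (Φ z * u z y) :=
      measurable_const.mul (hΦ.mul (hu_left y))
    rw [← lintegral_add_left hm, ← lintegral_const_mul _ hΦ]
    refine lintegral_congr_ae ?_
    filter_upwards [hy] with z hz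
    rw [← mul_add, ← mul_add, hz, mul_one]
  calc (∫⁻ y, Φ y ∂μ) * ∫⁻ y, Φ y ∂μ = ∫⁻ y, Φ y * ∫⁻ z, Φ z ∂μ ∂μ :=
        (lintegral_mul_const _ hΦ).symm
    _ = ∫⁻ y, ∫⁻ z, Φ y * (Φ z * u z y) ∂μ ∂μ + ∫⁻ y, ∫⁻ z, Φ y * (Φ z * u y z) ∂μ ∂μ := by
        rw [lintegral_congr_ae hsplit, lintegral_add_left]
        exact Measurable.lintegral_prod_right ((hΦ.comp measurable_fst).mul
          ((hΦ.comp measurable_snd).mul hu'))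
    _ = 2 * ∫⁻ y, Φ y * ∫⁻ z, Φ z * u z y ∂μ ∂μ := by
        rw [hswap, ← two_mul]
        congr 1
        exact lintegral_congr fun y => lintegral_const_mul _ (hΦ.mul (hu_left y))

theorem lintegral_pow_succ_le_two_pow_mul [SFinite μ] {Φ : X → ℝ≥0∞} (hΦ : Measurable Φ)
    (hΦ_ne_top : ∫⁻ y, Φ y ∂μ ≠ ∞) {u : X → X → ℝ≥0∞} (hu : Measurable fun q : X × X => u q.1 q.2)
    (hsum : ∀ᵐ y ∂μ, ∀ᵐ z ∂μ, u z y + u y z = 1) (n : ℕ) :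
    (∫⁻ y, Φ y ∂μ) ^ (n + 1) ≤ 2 ^ n * ∫⁻ y, Φ y * (∫⁻ z, Φ z * u z y ∂μ) ^ n ∂μ := by
  set S := ∫⁻ y, Φ y ∂μ
  set d : X → ℝ≥0∞ := fun y => ∫⁻ z, Φ z * u z y ∂μ
  obtain _ | m := n
  · simp [S]
  obtain hS | hS := eq_or_ne S 0
  · simp [hS]
  have hd : Measurable d := Measurable.lintegral_prod_right
    ((hΦ.comp measurable_snd).mul (hu.comp measurable_swap))
  refine (ENNReal.mul_le_mul_iff_right (pow_ne_zero m hS) (ENNReal.pow_ne_top hΦ_ne_top)).mp ?_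
  calc S ^ m * S ^ (m + 1 + 1) = (S * S) ^ (m + 1) := by ring
    _ = 2 ^ (m + 1) * (∫⁻ y, Φ y * d y ∂μ) ^ (m + 1) := by
        rw [lintegral_mul_self_eq_two_mul hΦ hu hsum, mul_pow]
    _ ≤ 2 ^ (m + 1) * (S ^ m * ∫⁻ y, Φ y * d y ^ (m + 1) ∂μ) :=
        mul_le_mul_right (lintegral_mul_pow_succ_le hΦ.aemeasurable hd.aemeasurable m) _
    _ = S ^ m * (2 ^ (m + 1) * ∫⁻ y, Φ y * d y ^ (m + 1) ∂μ) := by ring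

end Tournament

section Marginal

variable {V X : Type*} [DecidableEq V] [MeasurableSpace X] {μ : Measure X}

theorem lmarginal_const_mul (s : Finset V) (c : ℝ≥0∞) {f : (V → X) → ℝ≥0∞}
    (hf : Measurable f) (x : V → X) :
    (∫⋯∫⁻_s, fun x => c * f x ∂fun _ => μ) x = c * (∫⋯∫⁻_s, f ∂fun _ => μ) x :=
  lintegral_const_mul _ (hf.comp measurable_updateFinset)

theorem lmarginal_mul_prod_eq [SigmaFinite μ] (s : Finset V) {p : (V → X) → ℝ≥0∞}
    {g : X → (V → X) → ℝ≥0∞}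
    (hp : Measurable p) (hg : Measurable fun q : X × (V → X) => g q.1 q.2)
    (hp_update : ∀ x a y, a ∈ s → p (Function.update x a y) = p x)
    (hg_update : ∀ z x a y, a ∈ s → g z (Function.update x a y) = g z x) (x : V → X) :
    (∫⋯∫⁻_s, fun x => p x * ∏ a ∈ s, g (x a) x ∂fun _ => μ) x
      = p x * (∫⁻ z, g z x ∂μ) ^ #s := by
  induction s using Finset.induction generalizing p x with
  | empty => simp
  | @insert i s hi ih =>
    have hg_apply : ∀ a : V, Measurable fun x : V → X => g (x a) x :=
      fun a => hg.comp (f := fun x : V → X => (x a, x))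
        ((measurable_pi_apply a).prodMk measurable_id)
    have hp' : Measurable fun x => p x * g (x i) x := hp.mul (hg_apply i)
    have hp'_update : ∀ x a y, a ∈ s →
        p (Function.update x a y) * g (Function.update x a y i) (Function.update x a y)
          = p x * g (x i) x := fun x a y ha => by
      rw [hp_update x a y (mem_insert_of_mem ha),
        Function.update_of_ne (ne_of_mem_of_not_mem ha hi).symm,
        hg_update _ x a y (mem_insert_of_mem ha)]
    simp_rw [prod_insert hi, ← mul_assoc]
    have hm : Measurable fun x => p x * g (x i) x * ∏ a ∈ s, g (x a) x :=
      hp'.mul (Finset.measurable_prod _ fun a _ => hg_apply a)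
    rw [lmarginal_insert _ hm hi]
    simp_rw [ih hp' hp'_update fun z x a y ha => hg_update z x a y (mem_insert_of_mem ha),
      hp_update x i _ (mem_insert_self i s), Function.update_self,
      hg_update _ x i _ (mem_insert_self i s)]
    have hgx : Measurable fun z => g z x :=
      hg.comp (f := fun z => (z, x)) (measurable_id.prodMk measurable_const)
    rw [lintegral_mul_const _ (hgx.const_mul _), lintegral_const_mul _ hgx,
      card_insert_of_notMem hi, pow_succ']
    ring

end Marginal

open scoped Classical in
/-- The factor of `homIntegrand E W x` contributed by a twin of `b` placed at `z`. -/
def twinFactor {V : Type} [Fintype V] (E : V → V → Prop) (W : ℝ → ℝ → ℝ) (b : V) (z : ℝ)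
    (x : V → ℝ) : ℝ≥0∞ :=
  (∏ w ∈ univ.filter (E b ·), edgeWeight W z (x w)) *
    ∏ w ∈ univ.filter (E · b), edgeWeight W (x w) z

open scoped Classical in
def outerFactor {V : Type} [Fintype V] (E : V → V → Prop) (W : ℝ → ℝ → ℝ) (A : Finset V)
    (x : V → ℝ) : ℝ≥0∞ :=
  ∏ p ∈ univ.filter (fun p : V × V => E p.1 p.2 ∧ p.1 ∉ A ∧ p.2 ∉ A),
    edgeWeight W (x p.1) (x p.2)

def IsIndepTwinSet {V : Type} (E : V → V → Prop) (A : Finset V) : Prop :=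
  (∀ u ∈ A, ∀ v ∈ A, ¬ E u v) ∧ ∀ u ∈ A, ∀ v ∈ A, ∀ w, (E u w ↔ E v w) ∧ (E w u ↔ E w v)

section Twins

variable {V : Type} [Fintype V] {E : V → V → Prop} {W : ℝ → ℝ → ℝ}
  {A : Finset V} {b : V}

theorem homIntegrand_eq_outerFactor_mul_prod (hA : IsIndepTwinSet E A) (hb : b ∈ A)
    (x : V → ℝ) :
    homIntegrand E W x = outerFactor E W A x * ∏ a ∈ A, twinFactor E W b (x a) x := by
  classical
  obtain ⟨hIndep, hTwins⟩ := hA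
  set f : V × V → ℝ≥0∞ := fun p => edgeWeight W (x p.1) (x p.2)
  set S := univ.filter fun p : V × V => E p.1 p.2
  have hfrom : ∏ p ∈ S.filter (·.1 ∈ A), f p = ∏ a ∈ A, ∏ w ∈ univ.filter (E b ·), f (a, w) := by
    have hS : S.filter (·.1 ∈ A) = (A ×ˢ univ).filter fun p => E p.1 p.2 := by
      ext p; simp [S, and_comm]
    rw [hS, prod_filter, prod_product]
    refine prod_congr rfl fun a ha => ?_
    rw [prod_filter]
    exact prod_congr rfl fun w _ => by simp only [(hTwins a ha b hb w).1]
  have hto : ∏ p ∈ (S.filter (·.1 ∉ A)).filter (·.2 ∈ A), f p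
      = ∏ a ∈ A, ∏ w ∈ univ.filter (E · b), f (w, a) := by
    have hS : (S.filter (·.1 ∉ A)).filter (·.2 ∈ A) = (univ ×ˢ A).filter fun p => E p.1 p.2 := by
      ext p
      simp only [S, mem_filter, mem_univ, mem_product, true_and]
      have := hIndep p.1
      tauto
    rw [hS, prod_filter, prod_product_right]
    refine prod_congr rfl fun a ha => ?_
    rw [prod_filter]
    exact prod_congr rfl fun w _ => by simp only [(hTwins a ha b hb w).2]
  have hrest : ∏ p ∈ (S.filter (·.1 ∉ A)).filter (·.2 ∉ A), f p = outerFactor E W A x := by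
    rw [outerFactor]
    congr 1
    ext p
    simp [S, and_assoc]
  rw [homIntegrand, ← prod_filter_mul_prod_filter_not S (·.1 ∈ A),
    ← prod_filter_mul_prod_filter_not (S.filter (·.1 ∉ A)) (·.2 ∈ A), hfrom, hto, hrest]
  simp only [twinFactor, prod_mul_distrib, f]
  ring

theorem twinFactor_update [DecidableEq V] (hb : b ∈ A) (hIndep : ∀ u ∈ A, ∀ v ∈ A, ¬ E u v)
    {a : V} (ha : a ∈ A) (z : ℝ) (x : V → ℝ) (y : ℝ) :
    twinFactor E W b z (Function.update x a y) = twinFactor E W b z x := by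
  classical
  unfold twinFactor
  congr 1 <;> refine prod_congr rfl fun w hw => ?_ <;> rw [Function.update_of_ne]
  · exact fun h => hIndep b hb w (h ▸ ha) (mem_filter.mp hw).2
  · exact fun h => hIndep w (h ▸ ha) b hb (mem_filter.mp hw).2

theorem outerFactor_update [DecidableEq V] {a : V} (ha : a ∈ A) (x : V → ℝ) (y : ℝ) :
    outerFactor E W A (Function.update x a y) = outerFactor E W A x := by
  unfold outerFactor
  refine prod_congr rfl fun p hp => ?_
  simp only [mem_filter] at hp
  obtain ⟨-, -, h₁, h₂⟩ := hp
  rw [Function.update_of_ne (ne_of_mem_of_not_mem ha h₁).symm,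
    Function.update_of_ne (ne_of_mem_of_not_mem ha h₂).symm]

theorem Measurable.twinFactor {α : Type*} [MeasurableSpace α] (hW : IsTournamenton W) (b : V)
    {f : α → ℝ} {g : α → V → ℝ} (hf : Measurable f) (hg : Measurable g) :
    Measurable fun a => twinFactor E W b (f a) (g a) := by
  refine Measurable.mul (Finset.measurable_prod _ fun w _ => ?_)
    (Finset.measurable_prod _ fun w _ => ?_)
  · exact hf.edgeWeight hW ((measurable_pi_apply w).comp hg)
  · exact ((measurable_pi_apply w).comp hg).edgeWeight hW hf

theorem twinFactor_le_one (b : V) (z : ℝ) (x : V → ℝ) : twinFactor E W b z x ≤ 1 :=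
  mul_le_one' (prod_le_one (fun _ _ => zero_le) fun _ _ => edgeWeight_le_one _ _)
    (prod_le_one (fun _ _ => zero_le) fun _ _ => edgeWeight_le_one _ _)

theorem measurable_outerFactor (hW : IsTournamenton W) (A : Finset V) :
    Measurable (outerFactor E W A) :=
  Finset.measurable_prod _ fun p _ =>
    (measurable_pi_apply p.1).edgeWeight hW (measurable_pi_apply p.2)

end Twins

section AddEdges

variable {V : Type} [Fintype V] {W : ℝ → ℝ → ℝ}

theorem homIntegrand_or {E F : V → V → Prop} (hEF : ∀ u v, E u v → ¬ F u v) (x : V → ℝ) :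
    homIntegrand (fun u v => E u v ∨ F u v) W x = homIntegrand E W x * homIntegrand F W x := by
  classical
  unfold homIntegrand
  rw [← prod_union (disjoint_filter.mpr fun p _ => hEF p.1 p.2), ← filter_or]
  congr 1
  ext p
  simp

theorem homIntegrand_edges_to (A : Finset V) (b : V) (x : V → ℝ) :
    homIntegrand (fun u v => u ∈ A ∧ v = b) W x = ∏ a ∈ A, edgeWeight W (x a) (x b) := by
  classical
  rw [homIntegrand]
  convert prod_product A {b} fun p : V × V => edgeWeight W (x p.1) (x p.2) using 2
  · ext p
    simp [Prod.ext_iff, eq_comm]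
  · simp

theorem homIntegrand_addEdges_eq [DecidableEq V] {E : V → V → Prop} {A : Finset V} {b : V}
    (hA : IsIndepTwinSet E (insert b A)) (hb : b ∉ A) (x : V → ℝ) :
    homIntegrand (fun u v => E u v ∨ (u ∈ A ∧ v = b)) W x
      = (outerFactor E W (insert b A) x * twinFactor E W b (x b) x) *
          ∏ a ∈ A, (twinFactor E W b (x a) x * edgeWeight W (x a) (x b)) := by
  have hbA := mem_insert_self b A
  rw [homIntegrand_or fun u v huv ⟨hu, hv⟩ => hA.1 u (mem_insert_of_mem hu) v (hv ▸ hbA) huv,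
    homIntegrand_edges_to, homIntegrand_eq_outerFactor_mul_prod hA hbA, prod_insert hb,
    prod_mul_distrib]
  ring

end AddEdges

section Step

variable {V : Type} [Fintype V] [DecidableEq V] {E : V → V → Prop} {W : ℝ → ℝ → ℝ}
  {A : Finset V} {b : V}

theorem lmarginal_homIntegrand (hA : IsIndepTwinSet E A) (hb : b ∈ A) (hW : IsTournamenton W)
    (x : V → ℝ) :
    (∫⋯∫⁻_A, homIntegrand E W ∂fun _ => unitMeasure) x
      = outerFactor E W A x * (∫⁻ z, twinFactor E W b z x ∂unitMeasure) ^ #A := by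
  rw [funext (homIntegrand_eq_outerFactor_mul_prod hA hb)]
  exact lmarginal_mul_prod_eq A (measurable_outerFactor hW A)
    (measurable_fst.twinFactor hW b measurable_snd)
    (fun x _ y ha => outerFactor_update ha x y)
    (fun z x _ y ha => twinFactor_update hb hA.1 ha z x y) x

theorem lmarginal_homIntegrand_addEdges (hA : IsIndepTwinSet E (insert b A)) (hb : b ∉ A)
    (hW : IsTournamenton W) (x : V → ℝ) :
    (∫⋯∫⁻_insert b A, homIntegrand (fun u v => E u v ∨ (u ∈ A ∧ v = b)) W
        ∂fun _ => unitMeasure) x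
      = outerFactor E W (insert b A) x * ∫⁻ y, twinFactor E W b y x *
          (∫⁻ z, twinFactor E W b z x * edgeWeight W z y ∂unitMeasure) ^ #A ∂unitMeasure := by
  have hbA := mem_insert_self b A
  have hp : Measurable fun x => outerFactor E W (insert b A) x * twinFactor E W b (x b) x :=
    (measurable_outerFactor hW _).mul ((measurable_pi_apply b).twinFactor hW b measurable_id)
  have hg : Measurable fun q : ℝ × (V → ℝ) =>
      twinFactor E W b q.1 q.2 * edgeWeight W q.1 (q.2 b) :=
    (measurable_fst.twinFactor hW b measurable_snd).mul
      (measurable_fst.edgeWeight hW ((measurable_pi_apply b).comp measurable_snd))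
  rw [lmarginal_insert _ (measurable_homIntegrand _ hW) hb,
    funext (homIntegrand_addEdges_eq hA hb), ← lintegral_const_mul]
  refine lintegral_congr fun y => ?_
  rw [lmarginal_mul_prod_eq (g := fun z x => twinFactor E W b z x * edgeWeight W z (x b)) A hp hg]
  · simp_rw [outerFactor_update hbA, Function.update_self, twinFactor_update hbA hA.1 hbA]
    ring
  · intro x a y ha
    rw [outerFactor_update (mem_insert_of_mem ha),
      twinFactor_update hbA hA.1 (mem_insert_of_mem ha),
      Function.update_of_ne (ne_of_mem_of_not_mem ha hb).symm]
  · intro z x a y ha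
    rw [twinFactor_update hbA hA.1 (mem_insert_of_mem ha),
      Function.update_of_ne (ne_of_mem_of_not_mem ha hb).symm]
  · have hd : Measurable fun y => ∫⁻ z, twinFactor E W b z x * edgeWeight W z y ∂unitMeasure :=
      Measurable.lintegral_prod_right'
        (f := fun q : ℝ × ℝ => twinFactor E W b q.2 x * edgeWeight W q.2 q.1)
        ((measurable_snd.twinFactor hW b measurable_const).mul
          (measurable_snd.edgeWeight hW measurable_fst))
    exact (measurable_id.twinFactor hW b measurable_const).mul (hd.pow_const _)

theorem lhomDensity_le_two_pow_mul_addEdges (hA : IsIndepTwinSet E (insert b A)) (hb : b ∉ A)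
    (hW : IsTournamenton W) :
    lhomDensity E W ≤ 2 ^ #A * lhomDensity (fun u v => E u v ∨ (u ∈ A ∧ v = b)) W := by
  have hm := measurable_homIntegrand (fun u v => E u v ∨ (u ∈ A ∧ v = b)) hW
  rw [lhomDensity, lhomDensity, ← lintegral_const_mul _ hm]
  refine lintegral_le_of_lmarginal_le (insert b A) (measurable_homIntegrand E hW)
    (hm.const_mul _) fun x => ?_
  have hΦ : Measurable fun z => twinFactor E W b z x :=
    measurable_id.twinFactor hW b measurable_const
  have hΦ_ne_top : ∫⁻ z, twinFactor E W b z x ∂unitMeasure ≠ ∞ :=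
    ((lintegral_mono fun z => twinFactor_le_one b z x).trans_lt (by simp)).ne
  rw [lmarginal_const_mul _ _ hm, lmarginal_homIntegrand hA (mem_insert_self b A) hW,
    lmarginal_homIntegrand_addEdges hA hb hW, card_insert_of_notMem hb, mul_left_comm]
  exact mul_le_mul_right (lintegral_pow_succ_le_two_pow_mul hΦ hΦ_ne_top
    (measurable_fst.edgeWeight hW measurable_snd) hW.ae_edgeWeight_add_edgeWeight_swap #A) _

end Step

def withTransitiveOn {V : Type} (E : V → V → Prop) (A : Finset V) (ord : V → ℕ) :
    V → V → Prop :=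
  fun u v => E u v ∨ (u ∈ A ∧ v ∈ A ∧ ord u < ord v)

section Induction

variable {V : Type} [DecidableEq V] {E : V → V → Prop} {A : Finset V} {b : V}

theorem IsIndepTwinSet.addEdges (hA : IsIndepTwinSet E (insert b A)) (hb : b ∉ A) :
    IsIndepTwinSet (fun u v => E u v ∨ (u ∈ A ∧ v = b)) A := by
  obtain ⟨hIndep, hTwins⟩ := hA
  refine ⟨fun u hu v hv h => ?_, fun u hu v hv w => ?_⟩
  · obtain h | ⟨-, rfl⟩ := h
    exacts [hIndep u (mem_insert_of_mem hu) v (mem_insert_of_mem hv) h, hb hv]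
  · have := hTwins u (mem_insert_of_mem hu) v (mem_insert_of_mem hv) w
    have hub : u ≠ b := ne_of_mem_of_not_mem hu hb
    have hvb : v ≠ b := ne_of_mem_of_not_mem hv hb
    tauto

theorem withTransitiveOn_insert {ord : V → ℕ} (hmax : ∀ a ∈ A, ord a < ord b) :
    withTransitiveOn E (insert b A) ord
      = withTransitiveOn (fun u v => E u v ∨ (u ∈ A ∧ v = b)) A ord := by
  funext u v
  simp only [withTransitiveOn, mem_insert, eq_iff_iff]
  grind

theorem lhomDensity_le_two_pow_choose_mul_withTransitiveOn [Fintype V] {W : ℝ → ℝ → ℝ}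
    (hW : IsTournamenton W) {ord : V → ℕ} (hord : Function.Injective ord) (A : Finset V) :
    ∀ E, IsIndepTwinSet E A →
      lhomDensity E W ≤ 2 ^ (#A).choose 2 * lhomDensity (withTransitiveOn E A ord) W := by
  induction A using Finset.induction_on_max_value ord with
  | empty =>
    intro E _
    have hE : withTransitiveOn E ∅ ord = E := by
      funext u v
      simp [withTransitiveOn]
    simp [hE]
  | insert b A hb hmax ih =>
    intro E hA
    have hlt : ∀ a ∈ A, ord a < ord b := fun a ha =>
      (hmax a ha).lt_of_ne (hord.ne (ne_of_mem_of_not_mem ha hb))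
    calc lhomDensity E W
        ≤ 2 ^ #A * lhomDensity (fun u v => E u v ∨ (u ∈ A ∧ v = b)) W :=
          lhomDensity_le_two_pow_mul_addEdges hA hb hW
      _ ≤ 2 ^ #A * (2 ^ (#A).choose 2 *
            lhomDensity (withTransitiveOn (fun u v => E u v ∨ (u ∈ A ∧ v = b)) A ord) W) := by
          gcongr
          exact ih _ (hA.addEdges hb)
      _ = 2 ^ (#(insert b A)).choose 2 * lhomDensity (withTransitiveOn E (insert b A) ord) W := by
          rw [withTransitiveOn_insert hlt, card_insert_of_notMem hb, Nat.choose_succ_succ,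
            Nat.choose_one_right, pow_add, mul_assoc]

end Induction

theorem stmt8_general {V : Type} [Fintype V] [DecidableEq V] (E : V → V → Prop)
    (A : Finset V)
    (hIndep : ∀ u ∈ A, ∀ v ∈ A, ¬ E u v)
    (hTwins : ∀ u ∈ A, ∀ v ∈ A, ∀ w : V, (E u w ↔ E v w) ∧ (E w u ↔ E w v))
    (ord : V → ℕ) (hord : Function.Injective ord)
    (W : ℝ → ℝ → ℝ) (hW : IsTournamenton W) :
    (2 : ℝ) ^ (-(A.card.choose 2 : ℤ)) * homDensity E W ≤
      homDensity (fun u v => E u v ∨ (u ∈ A ∧ v ∈ A ∧ ord u < ord v)) W := by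
  have hmain := lhomDensity_le_two_pow_choose_mul_withTransitiveOn hW hord A E ⟨hIndep, hTwins⟩
  have hne_top : 2 ^ (#A).choose 2 * lhomDensity (withTransitiveOn E A ord) W ≠ ∞ :=
    ENNReal.mul_ne_top (ENNReal.pow_ne_top ENNReal.ofNat_ne_top)
      ((lhomDensity_le_one _).trans_lt ENNReal.one_lt_top).ne
  have hreal := ENNReal.toReal_mono hne_top hmain
  rw [ENNReal.toReal_mul, ENNReal.toReal_pow, ENNReal.toReal_ofNat,
    ← homDensity_eq_toReal_lhomDensity E hW, ← homDensity_eq_toReal_lhomDensity _ hW] at hreal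
  rw [zpow_neg, zpow_natCast, inv_mul_le_iff₀ (by positivity)]
  exact hreal

theorem stmt8 {V : Type} [Fintype V] [DecidableEq V] (E : V → V → Prop)
    (hsimple : ∀ w : V, ¬ E w w) (A : Finset V)
    (hIndep : ∀ u ∈ A, ∀ v ∈ A, ¬ E u v)
    (hTwins : ∀ u ∈ A, ∀ v ∈ A, ∀ w : V, (E u w ↔ E v w) ∧ (E w u ↔ E w v))
    (ord : V → ℕ) (hord : Function.Injective ord)
    (W : ℝ → ℝ → ℝ) (hW : IsTournamenton W) :
    (2 : ℝ) ^ (-(A.card.choose 2 : ℤ)) * homDensity E W ≤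
      homDensity (fun u v => E u v ∨ (u ∈ A ∧ v ∈ A ∧ ord u < ord v)) W :=
  stmt8_general E A hIndep hTwins ord hord W hW

end
end

section
/- Let T be a finite tournament with n vertices. If n ≥ 10, then there exists a regular tournamenton W such that t(T, W) > 2^(-(n choose 2)). -/
open MeasureTheory

noncomputable section

/-!
Put the `n` vertices of `T` and `n - 1` balancing vertices into the `N = 2n - 1` cells of a step
tournamenton: between vertices of `T` it is the `0/1` adjacency, and the balancing vertices make
every row sum `N / 2`. Placing each vertex of `T` in its own cell shows `t(T, W) ≥ N⁻ⁿ`, and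
`(2n - 1)ⁿ < 2^(n choose 2)` amounts to `(2n - 1)² < 2ⁿ⁻¹`, which holds from `n = 10` on.
-/
open Set Fintype

section Cells

variable (ι : Type*) [Fintype ι]

def cellSet (i : ι) : Set ℝ :=
  Ico ((equivFin ι i : ℝ) / card ι) ((equivFin ι i + 1 : ℝ) / card ι)

/-- The `min` puts the point `1` into the last cell. -/
def cell [Nonempty ι] (x : ℝ) : ι :=
  (equivFin ι).symm
    ⟨min ⌊x * card ι⌋₊ (card ι - 1), by have := card_pos (α := ι); omega⟩

variable {ι}

lemma cellSet_subset_Ico (i : ι) : cellSet ι i ⊆ Ico 0 1 := by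
  have hN : (0 : ℝ) < card ι := by exact_mod_cast card_pos_iff.2 ⟨i⟩
  have hi : (equivFin ι i : ℝ) + 1 ≤ card ι := by exact_mod_cast (equivFin ι i).isLt
  rintro x ⟨h₀, h₁⟩
  refine ⟨le_trans (by positivity) h₀, h₁.trans_le ?_⟩
  rwa [div_le_one hN]

lemma measurableSet_cellSet (i : ι) : MeasurableSet (cellSet ι i) := measurableSet_Ico

lemma volume_cellSet (i : ι) : volume (cellSet ι i) = ENNReal.ofReal (1 / card ι) := by
  rw [cellSet, Real.volume_Ico, ← sub_div, add_sub_cancel_left]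

variable [Nonempty ι]

lemma cell_eq_of_mem_cellSet {i : ι} {x : ℝ} (hx : x ∈ cellSet ι i) : cell ι x = i := by
  have hN : (0 : ℝ) < card ι := by exact_mod_cast card_pos (α := ι)
  obtain ⟨h₀, h₁⟩ := hx
  rw [div_le_iff₀ hN] at h₀
  rw [lt_div_iff₀ hN] at h₁
  have hfloor : ⌊x * card ι⌋₊ = equivFin ι i :=
    (Nat.floor_eq_iff (le_trans (Nat.cast_nonneg _) h₀)).2 ⟨h₀, h₁⟩
  rw [cell, Equiv.symm_apply_eq]
  ext
  simp only [hfloor]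
  have := (equivFin ι i).isLt
  omega

lemma mem_cellSet_cell {x : ℝ} (hx : x ∈ Ico 0 1) : x ∈ cellSet ι (cell ι x) := by
  have hN : (0 : ℝ) < card ι := by exact_mod_cast card_pos (α := ι)
  have hlt : ⌊x * card ι⌋₊ < card ι :=
    (Nat.floor_lt (by nlinarith [hx.1])).2 (by nlinarith [hx.2])
  have hcell : (equivFin ι (cell ι x) : ℕ) = ⌊x * card ι⌋₊ := by
    simp only [cell, Equiv.apply_symm_apply]
    omega
  rw [cellSet, hcell, mem_Ico, div_le_iff₀ hN, lt_div_iff₀ hN]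
  exact ⟨Nat.floor_le (by nlinarith [hx.1]), Nat.lt_floor_add_one _⟩

lemma iUnion_cellSet : ⋃ i, cellSet ι i = Ico 0 1 :=
  Subset.antisymm (iUnion_subset cellSet_subset_Ico)
    fun _ hx => mem_iUnion.2 ⟨_, mem_cellSet_cell hx⟩

lemma pairwise_disjoint_cellSet : Pairwise (Function.onFun Disjoint (cellSet ι)) := fun _ _ hij =>
  Set.disjoint_left.2 fun _ hi hj =>
    hij ((cell_eq_of_mem_cellSet hi).symm.trans (cell_eq_of_mem_cellSet hj))

lemma integral_comp_cell (f : ι → ℝ) :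
    ∫ y in Icc (0 : ℝ) 1, f (cell ι y) = (∑ i, f i) / card ι := by
  have hconst : ∀ i, EqOn (fun y => f (cell ι y)) (fun _ => f i) (cellSet ι i) :=
    fun i y hy => congrArg f (cell_eq_of_mem_cellSet hy)
  rw [integral_Icc_eq_integral_Ico, ← iUnion_cellSet (ι := ι),
    integral_iUnion_fintype measurableSet_cellSet (pairwise_disjoint_cellSet (ι := ι)) fun i =>
      (integrableOn_const (by simp [volume_cellSet])).congr_fun (hconst i).symm
        (measurableSet_cellSet i),
    Finset.sum_div]
  refine Finset.sum_congr rfl fun i _ => ?_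
  rw [setIntegral_congr_fun (measurableSet_cellSet i) (hconst i), setIntegral_const,
    measureReal_def, volume_cellSet, ENNReal.toReal_ofReal (by positivity), smul_eq_mul]
  ring

end Cells

section StepKernel

variable {ι : Type*} [Fintype ι]

structure IsRegularTournamentMatrix (A : ι → ι → ℝ) : Prop where
  nonneg : ∀ i j, 0 ≤ A i j
  add_swap : ∀ i j, A i j + A j i = 1
  sum_row : ∀ i, ∑ j, A i j = card ι / 2

lemma IsRegularTournamentMatrix.le_one {A : ι → ι → ℝ} (hA : IsRegularTournamentMatrix A)
    (i j : ι) : A i j ≤ 1 := by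
  linarith [hA.add_swap i j, hA.nonneg j i]

variable [Nonempty ι]

def stepKernel (A : ι → ι → ℝ) (x y : ℝ) : ℝ := A (cell ι x) (cell ι y)

lemma measurable_stepKernel (A : ι → ι → ℝ) :
    Measurable (Function.uncurry (stepKernel A)) := by
  -- `cell ι x` unfolds to `cellOfNat ⌊x * card ι⌋₊`
  let cellOfNat : ℕ → ι := fun k =>
    (equivFin ι).symm ⟨min k (card ι - 1), by have := card_pos (α := ι); omega⟩
  have hfloor : Measurable fun p : ℝ × ℝ => (⌊p.1 * card ι⌋₊, ⌊p.2 * card ι⌋₊) :=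
    by fun_prop
  exact (measurable_of_countable fun q : ℕ × ℕ => A (cellOfNat q.1) (cellOfNat q.2)).comp
    hfloor

variable {A : ι → ι → ℝ}

lemma isTournamenton_stepKernel (hA : IsRegularTournamentMatrix A) :
    IsTournamenton (stepKernel A) :=
  ⟨measurable_stepKernel A, fun _ _ _ _ =>
    ⟨hA.nonneg _ _, hA.le_one _ _, hA.add_swap _ _⟩⟩

lemma isRegularT_stepKernel (hA : IsRegularTournamentMatrix A) : IsRegularT (stepKernel A) := by
  refine Filter.Eventually.of_forall fun x _ => ?_
  have hN : (card ι : ℝ) ≠ 0 := by exact_mod_cast Fintype.card_ne_zero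
  change ∫ y in Icc (0 : ℝ) 1, A (cell ι x) (cell ι y) = 1 / 2
  rw [integral_comp_cell, hA.sum_row]
  field_simp

lemma pow_le_homDensity_stepKernel {V : Type} [Fintype V] (E : V → V → Prop)
    (h₀ : ∀ i j, 0 ≤ A i j) (h₁ : ∀ i j, A i j ≤ 1) (f : V → ι)
    (hf : ∀ u v, E u v → A (f u) (f v) = 1) :
    (1 / card ι : ℝ) ^ card V ≤ homDensity E (stepKernel A) := by
  classical
  unfold homDensity
  set F : (V → ℝ) → ℝ := fun x =>
    ∏ p ∈ Finset.univ.filter (fun p : V × V => E p.1 p.2), stepKernel A (x p.1) (x p.2)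
  set cube : Set (V → ℝ) := univ.pi fun _ => I01
  set box : Set (V → ℝ) := univ.pi fun v => cellSet ι (f v)
  have hF₀ : ∀ x, 0 ≤ F x := fun x => Finset.prod_nonneg fun _ _ => h₀ _ _
  have hF₁ : ∀ x, ‖F x‖ ≤ 1 := fun x => by
    rw [Real.norm_of_nonneg (hF₀ x)]
    exact Finset.prod_le_one (fun _ _ => h₀ _ _) fun _ _ => h₁ _ _
  have hF_meas : Measurable F := Finset.measurable_prod _ fun p _ =>
    (measurable_stepKernel A).comp (f := fun x : V → ℝ => (x p.1, x p.2)) (by fun_prop)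
  have hbox_cube : box ⊆ cube :=
    pi_mono fun v _ => (cellSet_subset_Ico (f v)).trans Ico_subset_Icc_self
  have hF_box : EqOn F 1 box := fun x hx =>
    Finset.prod_eq_one fun p hp => by
      rw [stepKernel, cell_eq_of_mem_cellSet (hx p.1 trivial),
        cell_eq_of_mem_cellSet (hx p.2 trivial)]
      exact hf _ _ (Finset.mem_filter.1 hp).2
  have hbox : ∫ x in box, F x = (1 / card ι : ℝ) ^ card V := by
    rw [setIntegral_congr_fun (MeasurableSet.univ_pi fun v => measurableSet_cellSet (f v)) hF_box,
      Pi.one_def, setIntegral_const, measureReal_def, volume_pi_pi]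
    simp only [volume_cellSet, Finset.prod_const, Finset.card_univ, smul_eq_mul, mul_one]
    rw [ENNReal.toReal_pow, ENNReal.toReal_ofReal (by positivity)]
  rw [← hbox]
  refine setIntegral_mono_set ?_ (Filter.Eventually.of_forall hF₀) hbox_cube.eventuallyLE
  refine Measure.integrableOn_of_bounded ?_ hF_meas.aestronglyMeasurable
    (Filter.Eventually.of_forall hF₁)
  simp only [cube, I01, volume_pi_pi, Real.volume_Icc]
  simp

end StepKernel

section RegularExtension

variable {V : Type} (E : V → V → Prop) [DecidableRel E]

def tournamentMatrix [DecidableEq V] (u v : V) : ℝ :=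
  if E u v then 1 else if u = v then 1 / 2 else 0

variable {E}

lemma tournamentMatrix_nonneg [DecidableEq V] (u v : V) : 0 ≤ tournamentMatrix E u v := by
  unfold tournamentMatrix
  split_ifs <;> norm_num

lemma tournamentMatrix_add_swap [DecidableEq V] (hT : IsTournament E) (u v : V) :
    tournamentMatrix E u v + tournamentMatrix E v u = 1 := by
  unfold tournamentMatrix
  rcases eq_or_ne u v with rfl | hne
  · norm_num [hT.1 u]
  · by_cases huv : E u v
    · simp [huv, (hT.2 u v hne).1 huv, hne.symm]
    · simp [huv, not_not.1 (mt (hT.2 u v hne).2 huv), hne]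

variable (E) [Fintype V]

def outdeg (u : V) : ℕ := (Finset.univ.filter (E u ·)).card

def indeg (u : V) : ℕ := (Finset.univ.filter (E · u)).card

variable {E}

lemma outdeg_add_indeg [DecidableEq V] (hT : IsTournament E) (u : V) :
    outdeg E u + indeg E u = card V - 1 := by
  have hdisj : Disjoint (Finset.univ.filter (E u ·)) (Finset.univ.filter (E · u)) :=
    Finset.disjoint_filter.2 fun v _ huv hvu => by
      rcases eq_or_ne u v with rfl | hne
      · exact hT.1 u huv
      · exact (hT.2 u v hne).1 huv hvu
  have hunion :
      Finset.univ.filter (E u ·) ∪ Finset.univ.filter (E · u) = Finset.univ.erase u := by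
    ext v
    simp only [Finset.mem_union, Finset.mem_filter, Finset.mem_univ, true_and,
      Finset.mem_erase, and_true]
    constructor
    · rintro (h | h) rfl <;> exact hT.1 _ h
    · intro hvu
      by_cases huv : E u v
      · exact Or.inl huv
      · exact Or.inr (by_contra fun hvu' => huv ((hT.2 u v hvu.symm).2 hvu'))
  rw [outdeg, indeg, ← Finset.card_union_of_disjoint hdisj, hunion,
    Finset.card_erase_of_mem (Finset.mem_univ u), Finset.card_univ]

lemma sum_outdeg_eq_sum_indeg : ∑ u, outdeg E u = ∑ u, indeg E u := by
  simp only [outdeg, indeg, Finset.card_filter]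
  exact Finset.sum_comm

lemma two_mul_sum_outdeg [DecidableEq V] (hT : IsTournament E) :
    2 * ∑ u, outdeg E u = card V * (card V - 1) := by
  rw [two_mul]
  nth_rw 2 [sum_outdeg_eq_sum_indeg]
  rw [← Finset.sum_add_distrib, Finset.sum_congr rfl fun u _ => outdeg_add_indeg hT u,
    Finset.sum_const, Finset.card_univ, smul_eq_mul]

variable [DecidableEq V]

lemma sum_tournamentMatrix (hT : IsTournament E) (u : V) :
    ∑ v, tournamentMatrix E u v = outdeg E u + 1 / 2 := by
  have hsplit : ∀ v, tournamentMatrix E u v =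
      (if E u v then 1 else 0) + if u = v then 1 / 2 else 0 := fun v => by
    unfold tournamentMatrix
    rcases eq_or_ne u v with rfl | hne <;> simp [*, hT.1]
  simp only [hsplit, Finset.sum_add_distrib, Finset.sum_boole, Finset.sum_ite_eq,
    Finset.mem_univ, if_true, outdeg]

variable (E)

/-- A balancing vertex beats `v` with probability `outdeg v / (card V - 1)`; as in- and
out-degrees in a tournament add up to `card V - 1`, this tops every row sum up to
`(2 card V - 1) / 2`. -/
def regularExtension : V ⊕ Fin (card V - 1) → V ⊕ Fin (card V - 1) → ℝ
  | .inl u, .inl v => tournamentMatrix E u v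
  | .inl u, .inr _ => indeg E u / (card V - 1 : ℕ)
  | .inr _, .inl v => outdeg E v / (card V - 1 : ℕ)
  | .inr _, .inr _ => 1 / 2

variable {E}

lemma isRegularTournamentMatrix_regularExtension (hT : IsTournament E) :
    IsRegularTournamentMatrix (regularExtension E) where
  nonneg
    | .inl u, .inl v => tournamentMatrix_nonneg u v
    | .inl _, .inr _ | .inr _, .inl _ => by simp only [regularExtension]; positivity
    | .inr _, .inr _ => by norm_num [regularExtension]
  add_swap
    | .inl u, .inl v => tournamentMatrix_add_swap hT u v
    | .inl u, .inr j | .inr j, .inl u => by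
      have hm : (outdeg E u + indeg E u : ℝ) ≠ 0 := by
        exact_mod_cast (outdeg_add_indeg hT u).symm ▸ j.pos.ne'
      simp only [regularExtension, ← outdeg_add_indeg hT u, Nat.cast_add]
      rw [← add_div, div_eq_one_iff_eq hm, add_comm]
    | .inr _, .inr _ => by norm_num [regularExtension]
  sum_row i := by
    rw [Fintype.sum_sum_type, card_sum, card_fin]
    rcases i with u | j
    · have hn : 0 < card V := card_pos_iff.2 ⟨u⟩
      have hdeg := outdeg_add_indeg hT u
      have hcancel : (card V - 1 : ℕ) * (indeg E u / (card V - 1 : ℕ) : ℝ) = indeg E u :=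
        mul_div_cancel_of_imp' fun h => by
          have : card V - 1 = 0 := by exact_mod_cast h
          exact_mod_cast (by omega : indeg E u = 0)
      simp only [regularExtension, sum_tournamentMatrix hT, Finset.sum_const, Finset.card_univ,
        card_fin, nsmul_eq_mul, hcancel]
      rw [show card V + (card V - 1) = 2 * (outdeg E u + indeg E u) + 1 by omega]
      push_cast
      ring
    · have hm : (card V - 1 : ℕ) ≠ (0 : ℝ) := by exact_mod_cast j.pos.ne'
      have hsum : 2 * ∑ v, (outdeg E v : ℝ) = card V * (card V - 1 : ℕ) := by
        exact_mod_cast two_mul_sum_outdeg hT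
      simp only [regularExtension, ← Finset.sum_div, Finset.sum_const, Finset.card_univ,
        card_fin, nsmul_eq_mul]
      push_cast
      field_simp
      linear_combination hsum

end RegularExtension

lemma sq_two_mul_sub_one_lt_two_pow {n : ℕ} (hn : 10 ≤ n) : (2 * n - 1) ^ 2 < 2 ^ (n - 1) := by
  induction n, hn using Nat.le_induction with
  | base => norm_num
  | succ n hn ih =>
    have hstep : (2 * n - 1 + 2) ^ 2 ≤ 2 * (2 * n - 1) ^ 2 := by
      have : 19 ≤ 2 * n - 1 := by omega
      nlinarith
    calc (2 * (n + 1) - 1) ^ 2 = (2 * n - 1 + 2) ^ 2 := by congr 1; omega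
      _ ≤ 2 * (2 * n - 1) ^ 2 := hstep
      _ < 2 * 2 ^ (n - 1) := by omega
      _ = 2 ^ (n + 1 - 1) := by rw [← pow_succ']; congr 1; omega

lemma two_mul_sub_one_pow_lt_two_pow_choose {n : ℕ} (hn : 10 ≤ n) :
    (2 * n - 1) ^ n < 2 ^ n.choose 2 := by
  have hchoose : n.choose 2 * 2 = n * (n - 1) := by
    rw [Nat.choose_two_right]
    exact Nat.div_mul_cancel (Nat.even_mul_pred_self n).two_dvd
  refine (Nat.pow_lt_pow_iff_left two_ne_zero).1 ?_
  calc ((2 * n - 1) ^ n) ^ 2 = ((2 * n - 1) ^ 2) ^ n := by ring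
    _ < (2 ^ (n - 1)) ^ n := Nat.pow_lt_pow_left (sq_two_mul_sub_one_lt_two_pow hn) (by omega)
    _ = (2 ^ n.choose 2) ^ 2 := by rw [← pow_mul, ← pow_mul, hchoose, mul_comm]

theorem stmt9 {V : Type} [Fintype V] (E : V → V → Prop) (hT : IsTournament E)
    (hn : 10 ≤ Fintype.card V) :
    ∃ W : ℝ → ℝ → ℝ, IsTournamenton W ∧ IsRegularT W ∧
      (2 : ℝ) ^ (-((Fintype.card V).choose 2 : ℤ)) < homDensity E W := by
  classical
  have : Nonempty V := card_pos_iff.1 (by omega)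
  have hA := isRegularTournamentMatrix_regularExtension hT
  refine ⟨stepKernel (regularExtension E), isTournamenton_stepKernel hA,
    isRegularT_stepKernel hA, ?_⟩
  have hcard : card (V ⊕ Fin (card V - 1)) = 2 * card V - 1 := by
    rw [card_sum, card_fin]
    omega
  have hbound : (2 : ℝ) ^ (-((card V).choose 2 : ℤ)) <
      (1 / (2 * card V - 1 : ℕ) : ℝ) ^ card V := by
    have hpos : (0 : ℝ) < (2 * card V - 1 : ℕ) := by
      exact_mod_cast (by omega : 0 < 2 * card V - 1)
    rw [zpow_neg, zpow_natCast, one_div, inv_pow]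
    exact inv_strictAnti₀ (pow_pos hpos _)
      (by exact_mod_cast two_mul_sub_one_pow_lt_two_pow_choose hn)
  refine hbound.trans_le ?_
  rw [← hcard]
  exact pow_le_homDensity_stepKernel E hA.nonneg hA.le_one Sum.inl
    fun u v huv => by simp [regularExtension, tournamentMatrix, huv]

end
end

section
/- For every positive integer n, the (2n+1)-vertex carousel tournament contains no subtournament isomorphic to W₄ and no subtournament isomorphic to L₄; indeed, in the carousel tournament the out-neighbors of any vertex induce a transitive tournament and the in-neighbors of any vertex induce a transitive tournament. -/
open MeasureTheory

noncomputable section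

def CarouselEdge (n : ℕ) (x y : ZMod (2 * n + 1)) : Prop :=
  ∃ k : ℕ, 1 ≤ k ∧ k ≤ n ∧ y - x = (k : ZMod (2 * n + 1))

/-!
After translating by `-v`, the out-neighbourhood of `v` in the carousel is `{1, …, n}`, on which
the edge relation is the usual order; negation maps the carousel onto its reverse, so the same
holds for in-neighbourhoods. A source or a sink attached to a cyclic triangle would place that
cycle inside a transitive neighbourhood.
-/

/-- For in-neighbourhoods, use `OutNbhdTransitive (flip E)`. -/
def OutNbhdTransitive {V : Type} (E : V → V → Prop) : Prop :=
  ∀ v x y z : V, E v x → E v y → E v z → E x y → E y z → E x z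

section LocallyTransitive

variable {V : Type} {E : V → V → Prop}

theorem OutNbhdTransitive.not_cycle (hirr : ∀ v, ¬ E v v) (h : OutNbhdTransitive E)
    {v a b c : V} (ha : E v a) (hb : E v b) (hc : E v c) (hab : E a b) (hbc : E b c) :
    ¬ E c a :=
  fun hca => hirr a (h v a c a ha hc ha (h v a b c ha hb hc hab hbc) hca)

theorem not_containsSub_W4Edge (hirr : ∀ v, ¬ E v v) (h : OutNbhdTransitive E) :
    ¬ ContainsSub E W4Edge := by
  rintro ⟨f, -, hf⟩
  have edge : ∀ u v : Fin 4, W4Edge u v → E (f u) (f v) := fun u v => (hf u v).mp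
  refine h.not_cycle hirr (edge 0 1 ?_) (edge 0 2 ?_) (edge 0 3 ?_)
    (edge 1 2 ?_) (edge 2 3 ?_) (edge 3 1 ?_)
  all_goals simp [W4Edge]

/-- Reversing all edges turns `L₄` into `W₄` with cyclic triangle `1 → 3 → 2`. -/
theorem not_containsSub_L4Edge (hirr : ∀ v, ¬ E v v) (h : OutNbhdTransitive (flip E)) :
    ¬ ContainsSub E L4Edge := by
  rintro ⟨f, -, hf⟩
  have edge : ∀ u v : Fin 4, L4Edge u v → E (f u) (f v) := fun u v => (hf u v).mp
  refine h.not_cycle (E := flip E) hirr (edge 1 0 ?_) (edge 3 0 ?_) (edge 2 0 ?_)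
    (edge 3 1 ?_) (edge 2 3 ?_) (edge 1 2 ?_)
  all_goals simp [L4Edge]

end LocallyTransitive

section Carousel

variable {n : ℕ}

theorem carouselEdge_iff_val {x y : ZMod (2 * n + 1)} :
    CarouselEdge n x y ↔ 1 ≤ (y - x).val ∧ (y - x).val ≤ n := by
  constructor
  · rintro ⟨k, hk1, hkn, hk⟩
    rw [hk, ZMod.val_cast_of_lt (by omega)]
    exact ⟨hk1, hkn⟩
  · rintro ⟨h1, hn⟩
    exact ⟨(y - x).val, h1, hn, (ZMod.natCast_zmod_val (y - x)).symm⟩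

theorem carouselEdge_irrefl (x : ZMod (2 * n + 1)) : ¬ CarouselEdge n x x := by
  simp [carouselEdge_iff_val]

theorem carouselEdge_sub_right {x y : ZMod (2 * n + 1)} (v : ZMod (2 * n + 1)) :
    CarouselEdge n (x - v) (y - v) ↔ CarouselEdge n x y := by
  simp only [CarouselEdge, sub_sub_sub_cancel_right]

theorem carouselEdge_neg {x y : ZMod (2 * n + 1)} :
    CarouselEdge n (-y) (-x) ↔ CarouselEdge n x y := by
  simp only [CarouselEdge, neg_sub_neg]

theorem carouselEdge_iff_val_lt {x y : ZMod (2 * n + 1)} (hx : CarouselEdge n 0 x)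
    (hy : CarouselEdge n 0 y) : CarouselEdge n x y ↔ x.val < y.val := by
  rw [carouselEdge_iff_val, sub_zero] at hx hy
  rw [carouselEdge_iff_val]
  constructor
  · rintro ⟨h1, hn⟩
    have hsum : y.val = ((y - x).val + x.val) % (2 * n + 1) := by
      rw [← ZMod.val_add, sub_add_cancel]
    rw [Nat.mod_eq_of_lt (by omega)] at hsum
    omega
  · intro hxy
    rw [ZMod.val_sub hxy.le]
    omega

theorem carousel_outNbhdTransitive : OutNbhdTransitive (CarouselEdge n) := by
  intro v x y z hx hy hz hxy hyz
  rw [← carouselEdge_sub_right v, sub_self] at hx hy hz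
  rw [← carouselEdge_sub_right v] at hxy hyz ⊢
  rw [carouselEdge_iff_val_lt hx hy] at hxy
  rw [carouselEdge_iff_val_lt hy hz] at hyz
  rw [carouselEdge_iff_val_lt hx hz]
  exact hxy.trans hyz

theorem carousel_inNbhdTransitive : OutNbhdTransitive (flip (CarouselEdge n)) := by
  intro v x y z hx hy hz hxy hyz
  exact carouselEdge_neg.mp <| carousel_outNbhdTransitive (-v) (-x) (-y) (-z)
    (carouselEdge_neg.mpr hx) (carouselEdge_neg.mpr hy) (carouselEdge_neg.mpr hz)
    (carouselEdge_neg.mpr hxy) (carouselEdge_neg.mpr hyz)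

end Carousel

theorem stmt14_general (n : ℕ) :
    ¬ ContainsSub (CarouselEdge n) W4Edge ∧
    ¬ ContainsSub (CarouselEdge n) L4Edge ∧
    (∀ v x y z : ZMod (2 * n + 1), CarouselEdge n v x → CarouselEdge n v y →
      CarouselEdge n v z → CarouselEdge n x y → CarouselEdge n y z →
      CarouselEdge n x z) ∧
    (∀ v x y z : ZMod (2 * n + 1), CarouselEdge n x v → CarouselEdge n y v →
      CarouselEdge n z v → CarouselEdge n x y → CarouselEdge n y z →
      CarouselEdge n x z) :=
  ⟨not_containsSub_W4Edge carouselEdge_irrefl carousel_outNbhdTransitive,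
    not_containsSub_L4Edge carouselEdge_irrefl carousel_inNbhdTransitive,
    carousel_outNbhdTransitive,
    fun v x y z hx hy hz hxy hyz => carousel_inNbhdTransitive v z y x hz hy hx hyz hxy⟩

theorem stmt14 (n : ℕ) (hn : 0 < n) :
    ¬ ContainsSub (CarouselEdge n) W4Edge ∧
    ¬ ContainsSub (CarouselEdge n) L4Edge ∧
    (∀ v x y z : ZMod (2 * n + 1), CarouselEdge n v x → CarouselEdge n v y →
      CarouselEdge n v z → CarouselEdge n x y → CarouselEdge n y z →
      CarouselEdge n x z) ∧
    (∀ v x y z : ZMod (2 * n + 1), CarouselEdge n x v → CarouselEdge n y v →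
      CarouselEdge n z v → CarouselEdge n x y → CarouselEdge n y z →
      CarouselEdge n x z) :=
  stmt14_general n

end
end

section
/- For every positive integer n, the n-th iterated blow-up of the cyclically oriented triangle contains no subtournament isomorphic to the 5-vertex carousel tournament C₅. -/
/-!
Comparing first coordinates, an embedding of a tournament `E` into the `(n+1)`-th blow-up gives a
map `g : V → ℤ/3` such that between distinct colour classes `E` is oriented like the cyclic
triangle. For `C₅` every such colouring is constant (a finite check), so the embedding lives in a
single copy of the `n`-th blow-up, and induction ends at the one-point tournament.
-/

open MeasureTheory

noncomputable section

def BlowupEdge (n : ℕ) (x y : Fin n → ZMod 3) : Prop :=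
  ∃ i : Fin n, x i ≠ y i ∧ (∀ j : Fin n, j < i → x j = y j) ∧ y i - x i = 1

def RespectsCyclicTriangle {V : Type} (E : V → V → Prop) (g : V → ZMod 3) : Prop :=
  ∀ u v, g u ≠ g v → (E u v ↔ g v - g u = 1)

lemma blowupEdge_succ_iff_of_head_ne {n : ℕ} {x y : Fin (n + 1) → ZMod 3} (h : x 0 ≠ y 0) :
    BlowupEdge (n + 1) x y ↔ y 0 - x 0 = 1 := by
  constructor
  · rintro ⟨i, -, hlt, hi⟩
    rcases eq_or_ne i 0 with rfl | hi0
    · exact hi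
    · exact absurd (hlt 0 (Fin.pos_of_ne_zero hi0)) h
  · exact fun h1 => ⟨0, h, fun j hj => absurd hj (Fin.not_lt_zero j), h1⟩

lemma blowupEdge_succ_iff_of_head_eq {n : ℕ} {x y : Fin (n + 1) → ZMod 3} (h : x 0 = y 0) :
    BlowupEdge (n + 1) x y ↔ BlowupEdge n (Fin.tail x) (Fin.tail y) := by
  constructor
  · rintro ⟨i, hne, hlt, hi⟩
    obtain ⟨j, rfl⟩ := Fin.eq_succ_of_ne_zero (i := i) (by rintro rfl; exact hne h)
    exact ⟨j, hne, fun k hk => hlt k.succ (Fin.succ_lt_succ_iff.mpr hk), hi⟩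
  · rintro ⟨j, hne, hlt, hj⟩
    refine ⟨j.succ, hne, Fin.cases (fun _ => h) fun k hk => hlt k ?_, hj⟩
    exact Fin.succ_lt_succ_iff.mp hk

lemma not_containsSub_blowupEdge_zero {V : Type} [Nontrivial V] (E : V → V → Prop) :
    ¬ ContainsSub (BlowupEdge 0) E := by
  rintro ⟨f, hf, -⟩
  obtain ⟨u, v, huv⟩ := exists_pair_ne V
  exact huv (hf (Subsingleton.elim _ _))

lemma ContainsSub.of_blowupEdge_succ {V : Type} {E : V → V → Prop} {n : ℕ}
    (hE : ∀ g, RespectsCyclicTriangle E g → ∀ u v, g u = g v)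
    (h : ContainsSub (BlowupEdge (n + 1)) E) : ContainsSub (BlowupEdge n) E := by
  obtain ⟨f, hf, hedge⟩ := h
  have hhead : ∀ u v, f u 0 = f v 0 :=
    hE (fun u => f u 0) fun u v huv => (hedge u v).trans (blowupEdge_succ_iff_of_head_ne huv)
  refine ⟨fun u => Fin.tail (f u), fun u v huv => hf ?_, fun u v => ?_⟩
  · rw [← Fin.cons_self_tail (f u), ← Fin.cons_self_tail (f v), hhead u v]
    exact congrArg _ huv
  · exact (hedge u v).trans (blowupEdge_succ_iff_of_head_eq (hhead u v))

lemma respectsCyclicTriangle_C5Edge_const (g : ZMod 5 → ZMod 3)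
    (hg : RespectsCyclicTriangle C5Edge g) (u v : ZMod 5) : g u = g v := by
  revert g u v
  unfold RespectsCyclicTriangle C5Edge
  set_option maxRecDepth 10000 in decide

theorem stmt15_general (n : ℕ) : ¬ ContainsSub (BlowupEdge n) C5Edge := by
  induction n with
  | zero =>
    have : Fact (1 < 5) := ⟨by norm_num⟩
    exact not_containsSub_blowupEdge_zero C5Edge
  | succ n ih => exact fun h => ih (h.of_blowupEdge_succ respectsCyclicTriangle_C5Edge_const)

theorem stmt15 (n : ℕ) (hn : 0 < n) : ¬ ContainsSub (BlowupEdge n) C5Edge :=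
  stmt15_general n

end
end
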